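/- arXiv:1011.1279 — 9 statements merged into one kernel-verified Lean document; each statement's English description precedes it below -/
import Mathlib

section
/- For all i, j ∈ [N], the discrete marginal profit contribution functions satisfy the cumulative maximum identities Σ_{i'=i}^{N} f(i',j) = max_{i ≤ i' ≤ N} i'·(Σ_{t=i'}^{N} φ(t,j)) and Σ_{j'=j}^{N} g(i,j') = max_{j ≤ j' ≤ N} j'·(Σ_{t=j'}^{N} φ(i,t)). -/
/-!
Since `max (a - s) 0 + s = max a s`, the recursion says that the tail sum `∑_{i' ≥ i} f(i', j)`
is the maximum of `i · ∑_{t ≥ i} φ(t, j)` and the next tail sum; unrolling from `i = N`, the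
tail sums are the running maxima of these revenues (and of `0`, which is dominated since `φ ≥ 0`).
-/

open Finset

variable {α : Type*} [AddCommGroup α] [LinearOrder α] [IsOrderedAddMonoid α]

theorem max_sub_zero_add (a s : α) : max (a - s) 0 + s = max a s := by
  rw [← max_add_add_right, sub_add_cancel, zero_add]

theorem sum_Icc_eq_max_sup'_zero_of_eq_max_sub_sum {N : ℕ} {F Φ : ℕ → α}
    (hF : ∀ i, F i = max (Φ i - ∑ i' ∈ Icc (i + 1) N, F i') 0) {i : ℕ} (hi : i ≤ N) :
    ∑ i' ∈ Icc i N, F i' = max ((Icc i N).sup' (nonempty_Icc.mpr hi) Φ) 0 := by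
  induction hi using Nat.decreasingInduction with
  | self => simp [hF N]
  | of_succ i hi ih =>
    have hins := insert_Icc_add_one_left_eq_Icc hi.le
    have hnotin : i ∉ Icc (i + 1) N := by simp
    calc ∑ i' ∈ Icc i N, F i'
        = F i + ∑ i' ∈ Icc (i + 1) N, F i' := by rw [← hins, sum_insert hnotin]
      _ = max (Φ i) (∑ i' ∈ Icc (i + 1) N, F i') := by rw [hF i, max_sub_zero_add]
      _ = max ((Icc i N).sup' (nonempty_Icc.mpr hi.le) Φ) 0 := by
        simp only [ih, ← hins]
        rw [sup'_insert (H := nonempty_Icc.mpr hi), ← max_assoc]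

theorem sum_Icc_eq_sup'_of_eq_max_sub_sum {N : ℕ} {F Φ : ℕ → α}
    (hF : ∀ i, F i = max (Φ i - ∑ i' ∈ Icc (i + 1) N, F i') 0) {i : ℕ} (hi : i ≤ N)
    (hΦ : 0 ≤ Φ i) :
    ∑ i' ∈ Icc i N, F i' = (Icc i N).sup' (nonempty_Icc.mpr hi) Φ := by
  rw [sum_Icc_eq_max_sup'_zero_of_eq_max_sub_sum hF hi,
    max_eq_left (hΦ.trans (le_sup' Φ (left_mem_Icc.mpr hi)))]

theorem mpc_cumulative_max_identities_general
    (N : ℕ) (φ f g : ℕ → ℕ → ℝ)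
    -- φ is a probability mass function on [N]×[N]
    (hφ : ∀ i j, 0 ≤ φ i j)
    -- downward recursions defining the marginal profit contribution functions
    (hf : ∀ i j, f i j =
      max ((i : ℝ) * ∑ i' ∈ Finset.Icc i N, φ i' j
            - ∑ i' ∈ Finset.Icc (i + 1) N, f i' j) 0)
    (hg : ∀ i j, g i j =
      max ((j : ℝ) * ∑ j' ∈ Finset.Icc j N, φ i j'
            - ∑ j' ∈ Finset.Icc (j + 1) N, g i j') 0)
    (i j : ℕ) (hiN : i ≤ N) (hjN : j ≤ N) :
    (∑ i' ∈ Finset.Icc i N, f i' j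
      = (Finset.Icc i N).sup' (Finset.nonempty_Icc.mpr hiN)
          (fun i' => (i' : ℝ) * ∑ t ∈ Finset.Icc i' N, φ t j)) ∧
    (∑ j' ∈ Finset.Icc j N, g i j'
      = (Finset.Icc j N).sup' (Finset.nonempty_Icc.mpr hjN)
          (fun j' => (j' : ℝ) * ∑ t ∈ Finset.Icc j' N, φ i t)) :=
  ⟨sum_Icc_eq_sup'_of_eq_max_sub_sum (fun i' => hf i' j) hiN
      (mul_nonneg i.cast_nonneg (sum_nonneg fun t _ => hφ t j)),
    sum_Icc_eq_sup'_of_eq_max_sub_sum (fun j' => hg i j') hjN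
      (mul_nonneg j.cast_nonneg (sum_nonneg fun t _ => hφ i t))⟩

/-- The discrete marginal profit contribution functions satisfy the
cumulative maximum identities
`Σ_{i'=i}^{N} f(i',j) = max_{i ≤ i' ≤ N} i'·(Σ_{t=i'}^{N} φ(t,j))` and
`Σ_{j'=j}^{N} g(i,j') = max_{j ≤ j' ≤ N} j'·(Σ_{t=j'}^{N} φ(i,t))`. -/
theorem mpc_cumulative_max_identities
    (N : ℕ) (φ f g : ℕ → ℕ → ℝ)
    -- φ is a probability mass function on [N]×[N]
    (hφ : ∀ i j, 0 ≤ φ i j)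
    (hφsum : ∑ i ∈ Finset.Icc 1 N, ∑ j ∈ Finset.Icc 1 N, φ i j = 1)
    -- downward recursions defining the marginal profit contribution functions
    (hf : ∀ i j, f i j =
      max ((i : ℝ) * ∑ i' ∈ Finset.Icc i N, φ i' j
            - ∑ i' ∈ Finset.Icc (i + 1) N, f i' j) 0)
    (hg : ∀ i j, g i j =
      max ((j : ℝ) * ∑ j' ∈ Finset.Icc j N, φ i j'
            - ∑ j' ∈ Finset.Icc (j + 1) N, g i j') 0)
    (i j : ℕ) (hi1 : 1 ≤ i) (hiN : i ≤ N) (hj1 : 1 ≤ j) (hjN : j ≤ N) :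
    (∑ i' ∈ Finset.Icc i N, f i' j
      = (Finset.Icc i N).sup' (Finset.nonempty_Icc.mpr hiN)
          (fun i' => (i' : ℝ) * ∑ t ∈ Finset.Icc i' N, φ t j)) ∧
    (∑ j' ∈ Finset.Icc j N, g i j'
      = (Finset.Icc j N).sup' (Finset.nonempty_Icc.mpr hjN)
          (fun j' => (j' : ℝ) * ∑ t ∈ Finset.Icc j' N, φ i t)) :=
  mpc_cumulative_max_identities_general N φ f g hφ hf hg i j hiN hjN
end

section
/- Let (α,β) be a proper valid allocation pair inducing the pair (A,B). Then the expected threshold revenue equals the total marginal profit contribution of the allocated points: Σ_{j : α(j) ≤ N} α(j)·(Σ_{i=α(j)}^{N} φ(i,j)) + Σ_{i : β(i) ≤ N} β(i)·(Σ_{j=β(i)}^{N} φ(i,j)) = Σ_{(i,j)∈A} f(i,j) + Σ_{(i,j)∈B} g(i,j). -/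
/-!
Fix a column `j` of `A` with threshold `a = α j ≤ N`. Properness says the recursion for
`f a j` is not truncated at `0`, so `f a j = a · Σ_{i ≥ a} φ(i,j) - Σ_{i > a} f(i,j)`: the
column of `A` sums exactly to the threshold revenue `a · Σ_{i ≥ a} φ(i,j)` of that column.
Summing over columns, and symmetrically over the rows of `B`, gives the identity.
-/

open Finset

lemma sum_Icc_eq_of_pos_of_eq_max {u : ℕ → ℝ} {c : ℝ} {k N : ℕ} (hk : k ≤ N)
    (hu : u k = max (c - ∑ i ∈ Icc (k + 1) N, u i) 0) (hpos : 0 < u k) :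
    ∑ i ∈ Icc k N, u i = c := by
  have hsplit : Icc k N = insert k (Icc (k + 1) N) := by
    ext x; simp only [mem_insert, mem_Icc]; omega
  have huk : u k = c - ∑ i ∈ Icc (k + 1) N, u i := by
    rw [hu] at hpos ⊢
    exact max_eq_left ((lt_max_iff.mp hpos).resolve_right (lt_irrefl 0)).le
  rw [hsplit, sum_insert (by simp), huk]
  ring

lemma sum_Icc_ite_le_eq_threshold_revenue {u w : ℕ → ℝ} {N a : ℕ}
    (hu : ∀ i, u i = max ((i : ℝ) * ∑ i' ∈ Icc i N, w i' - ∑ i' ∈ Icc (i + 1) N, u i') 0)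
    (ha : 1 ≤ a) (hpos : a ≤ N → 0 < u a) :
    ∑ i ∈ Icc 1 N, (if a ≤ i then u i else 0)
      = if a ≤ N then (a : ℝ) * ∑ i ∈ Icc a N, w i else 0 := by
  have hupper : (Icc 1 N).filter (a ≤ ·) = Icc a N := by
    ext x; simp only [mem_filter, mem_Icc]; omega
  rw [← sum_filter, hupper]
  split_ifs with haN
  · exact sum_Icc_eq_of_pos_of_eq_max haN (hu a) (hpos haN)
  · rw [Icc_eq_empty (by omega), sum_empty]

theorem threshold_revenue_eq_mpc_general
    (N : ℕ) (φ f g : ℕ → ℕ → ℝ)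
    -- downward recursions defining the marginal profit contribution functions
    (hf : ∀ i j, f i j =
      max ((i : ℝ) * ∑ i' ∈ Finset.Icc i N, φ i' j
            - ∑ i' ∈ Finset.Icc (i + 1) N, f i' j) 0)
    (hg : ∀ i j, g i j =
      max ((j : ℝ) * ∑ j' ∈ Finset.Icc j N, φ i j'
            - ∑ j' ∈ Finset.Icc (j + 1) N, g i j') 0)
    -- (α,β) is a pair of functions [N] → {1,…,N+1}
    (α β : ℕ → ℕ)
    (hα : ∀ j ∈ Finset.Icc 1 N, α j ∈ Finset.Icc 1 (N + 1))
    (hβ : ∀ i ∈ Finset.Icc 1 N, β i ∈ Finset.Icc 1 (N + 1))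
    -- properness
    (hpropα : ∀ j ∈ Finset.Icc 1 N, α j ≤ N → 0 < f (α j) j)
    (hpropβ : ∀ i ∈ Finset.Icc 1 N, β i ≤ N → 0 < g i (β i))
    -- the induced pair (A,B)
    (A B : Finset (ℕ × ℕ))
    (hA : A = (Finset.Icc 1 N ×ˢ Finset.Icc 1 N).filter (fun p => α p.2 ≤ p.1))
    (hB : B = (Finset.Icc 1 N ×ˢ Finset.Icc 1 N).filter (fun p => β p.1 ≤ p.2)) :
    (∑ j ∈ (Finset.Icc 1 N).filter (fun j => α j ≤ N),
        (α j : ℝ) * ∑ i ∈ Finset.Icc (α j) N, φ i j)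
    + (∑ i ∈ (Finset.Icc 1 N).filter (fun i => β i ≤ N),
        (β i : ℝ) * ∑ j ∈ Finset.Icc (β i) N, φ i j)
    = (∑ p ∈ A, f p.1 p.2) + (∑ p ∈ B, g p.1 p.2) := by
  have hcolumns : ∑ p ∈ A, f p.1 p.2 = ∑ j ∈ (Icc 1 N).filter (fun j => α j ≤ N),
      (α j : ℝ) * ∑ i ∈ Icc (α j) N, φ i j := by
    rw [hA, sum_filter, sum_product_right, sum_filter]
    refine sum_congr rfl fun j hj => ?_
    exact sum_Icc_ite_le_eq_threshold_revenue (fun i => hf i j) (mem_Icc.mp (hα j hj)).1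
      (hpropα j hj)
  have hrows : ∑ p ∈ B, g p.1 p.2 = ∑ i ∈ (Icc 1 N).filter (fun i => β i ≤ N),
      (β i : ℝ) * ∑ j ∈ Icc (β i) N, φ i j := by
    rw [hB, sum_filter, sum_product, sum_filter]
    refine sum_congr rfl fun i hi => ?_
    exact sum_Icc_ite_le_eq_threshold_revenue (hg i) (mem_Icc.mp (hβ i hi)).1 (hpropβ i hi)
  rw [hcolumns, hrows]

/-- For a proper valid allocation pair `(α,β)` inducing `(A,B)`,
the expected threshold revenue equals the total marginal profit contribution of
the allocated points. -/
theorem threshold_revenue_eq_mpc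
    (N : ℕ) (φ f g : ℕ → ℕ → ℝ)
    -- φ is a probability mass function on [N]×[N]
    (hφ : ∀ i j, 0 ≤ φ i j)
    (hφsum : ∑ i ∈ Finset.Icc 1 N, ∑ j ∈ Finset.Icc 1 N, φ i j = 1)
    -- downward recursions defining the marginal profit contribution functions
    (hf : ∀ i j, f i j =
      max ((i : ℝ) * ∑ i' ∈ Finset.Icc i N, φ i' j
            - ∑ i' ∈ Finset.Icc (i + 1) N, f i' j) 0)
    (hg : ∀ i j, g i j =
      max ((j : ℝ) * ∑ j' ∈ Finset.Icc j N, φ i j'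
            - ∑ j' ∈ Finset.Icc (j + 1) N, g i j') 0)
    -- (α,β) is a pair of functions [N] → {1,…,N+1}
    (α β : ℕ → ℕ)
    (hα : ∀ j ∈ Finset.Icc 1 N, α j ∈ Finset.Icc 1 (N + 1))
    (hβ : ∀ i ∈ Finset.Icc 1 N, β i ∈ Finset.Icc 1 (N + 1))
    -- non-crossing property
    (hnc : ∀ i ∈ Finset.Icc 1 N, ∀ j ∈ Finset.Icc 1 N, β i ≤ j → i < α j)
    -- properness
    (hpropα : ∀ j ∈ Finset.Icc 1 N, α j ≤ N → 0 < f (α j) j)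
    (hpropβ : ∀ i ∈ Finset.Icc 1 N, β i ≤ N → 0 < g i (β i))
    -- the induced pair (A,B)
    (A B : Finset (ℕ × ℕ))
    (hA : A = (Finset.Icc 1 N ×ˢ Finset.Icc 1 N).filter (fun p => α p.2 ≤ p.1))
    (hB : B = (Finset.Icc 1 N ×ˢ Finset.Icc 1 N).filter (fun p => β p.1 ≤ p.2)) :
    (∑ j ∈ (Finset.Icc 1 N).filter (fun j => α j ≤ N),
        (α j : ℝ) * ∑ i ∈ Finset.Icc (α j) N, φ i j)
    + (∑ i ∈ (Finset.Icc 1 N).filter (fun i => β i ≤ N),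
        (β i : ℝ) * ∑ j ∈ Finset.Icc (β i) N, φ i j)
    = (∑ p ∈ A, f p.1 p.2) + (∑ p ∈ B, g p.1 p.2) :=
  threshold_revenue_eq_mpc_general N φ f g hf hg α β hα hβ hpropα hpropβ A B hA hB
end

section
/- Let (A,B) be a pair of disjoint subsets of [N]×[N]. Then (A,B) ∈ Π(φ) if and only if (A,B) is monotone and proper and the vertex set {u_{i,j} : (i,j) ∈ A} ∪ {w_{i,j} : (i,j) ∈ B} is an independent set of the bipartite graph G^φ. -/
/-- The bipartite graph `G^φ`: one part `U` consists of vertices `u_{i,j}`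
(encoded as `Sum.inl (i,j)`), the other part `W` of vertices `w_{i,j}`
(encoded as `Sum.inr (i,j)`); `u_{i,j}` is adjacent to `w_{i',j'}` iff
`i ≤ i'` and `j' ≤ j`. -/
def Gphi : SimpleGraph ((ℕ × ℕ) ⊕ (ℕ × ℕ)) :=
  SimpleGraph.fromRel (fun a b =>
    ∃ i j i' j', a = Sum.inl (i, j) ∧ b = Sum.inr (i', j') ∧ i ≤ i' ∧ j' ≤ j)

/-- A set of vertices is independent if it contains no edge. -/
def IsIndepSetOf {V : Type*} (G : SimpleGraph V) (s : Set V) : Prop :=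
  ∀ a ∈ s, ∀ b ∈ s, ¬ G.Adj a b

/-- `(α,β)` is a valid allocation pair for `[N]`: functions `[N] → {1,…,N+1}`
satisfying the non-crossing property. -/
def ValidPair (N : ℕ) (α β : ℕ → ℕ) : Prop :=
  (∀ j ∈ Finset.Icc 1 N, α j ∈ Finset.Icc 1 (N + 1)) ∧
  (∀ i ∈ Finset.Icc 1 N, β i ∈ Finset.Icc 1 (N + 1)) ∧
  (∀ i ∈ Finset.Icc 1 N, ∀ j ∈ Finset.Icc 1 N, β i ≤ j → i < α j)

/-- `(α,β)` is proper with respect to marginal profit contributions `f`, `g`. -/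
def ProperPairFn (N : ℕ) (f g : ℕ → ℕ → ℝ) (α β : ℕ → ℕ) : Prop :=
  (∀ j ∈ Finset.Icc 1 N, α j ≤ N → 0 < f (α j) j) ∧
  (∀ i ∈ Finset.Icc 1 N, β i ≤ N → 0 < g i (β i))

/-- `(α,β)` induces the pair of sets `(A,B)`. -/
def InducedBy (N : ℕ) (α β : ℕ → ℕ) (A B : Finset (ℕ × ℕ)) : Prop :=
  A = (Finset.Icc 1 N ×ˢ Finset.Icc 1 N).filter (fun p => α p.2 ≤ p.1) ∧
  B = (Finset.Icc 1 N ×ˢ Finset.Icc 1 N).filter (fun p => β p.1 ≤ p.2)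

/-- `(A,B) ∈ Π(φ)`: the pair is induced by some proper valid allocation pair. -/
def InPi (N : ℕ) (f g : ℕ → ℕ → ℝ) (A B : Finset (ℕ × ℕ)) : Prop :=
  ∃ α β : ℕ → ℕ, ValidPair N α β ∧ ProperPairFn N f g α β ∧ InducedBy N α β A B

/-- A pair of disjoint subsets `(A,B)` of `[N]×[N]` is monotone. -/
def MonoPair (N : ℕ) (A B : Finset (ℕ × ℕ)) : Prop :=
  (∀ i j i', (i, j) ∈ A → i < i' → i' ≤ N → (i', j) ∈ A) ∧
  (∀ i j j', (i, j) ∈ B → j < j' → j' ≤ N → (i, j') ∈ B)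

/-- A pair of disjoint subsets `(A,B)` of `[N]×[N]` is proper: all lower
boundary points have positive marginal profit contribution. -/
def ProperPair (N : ℕ) (f g : ℕ → ℕ → ℝ) (A B : Finset (ℕ × ℕ)) : Prop :=
  (∀ i j, (i, j) ∈ A → (∀ i' < i, (i', j) ∉ A) → 0 < f i j) ∧
  (∀ i j, (i, j) ∈ B → (∀ j' < j, (i, j') ∉ B) → 0 < g i j)

/-- The vertex set `{u_{i,j} : (i,j) ∈ A} ∪ {w_{i,j} : (i,j) ∈ B}`. -/
def pairVerts (A B : Finset (ℕ × ℕ)) : Set ((ℕ × ℕ) ⊕ (ℕ × ℕ)) :=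
  (Sum.inl '' (A : Set (ℕ × ℕ))) ∪ (Sum.inr '' (B : Set (ℕ × ℕ)))

/-!
Read column by column, `A` is induced by `α` exactly when column `j` of `A` is an up-set of `[N]`
starting at `α j` (empty when `α j = N + 1`), and likewise for the rows of `B` and `β`. Hence
the induced pairs are the monotone ones, `α j` being the least element of column `j` of `A`, and
properness of `(α, β)` becomes properness of `(A, B)`. An edge `u_{i,j} w_{i',j'}` with
`(i, j) ∈ A` and `(i', j') ∈ B` gives `α j ≤ i ≤ i'` and `β i' ≤ j' ≤ j`, a crossing at `(i', j)`;
conversely a crossing at `(i, j)` puts `(i, j)` in both `A` and `B`, and `u_{i,j} w_{i,j}` is an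
edge. So independence is the non-crossing property.
-/

open Finset

section Threshold

variable {N i : ℕ} {S : Set ℕ}

noncomputable def threshold (N : ℕ) (S : Set ℕ) : ℕ := sInf (insert (N + 1) S)

lemma threshold_le (h : i ∈ S) : threshold N S ≤ i :=
  Nat.sInf_le (Set.mem_insert_of_mem _ h)

lemma threshold_le_succ (N : ℕ) (S : Set ℕ) : threshold N S ≤ N + 1 :=
  Nat.sInf_le (Set.mem_insert _ _)

lemma notMem_of_lt_threshold (h : i < threshold N S) : i ∉ S :=
  fun hi => (threshold_le hi).not_gt h

lemma threshold_mem_of_le (h : threshold N S ≤ N) : threshold N S ∈ S := by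
  rcases Nat.sInf_mem (Set.insert_nonempty (N + 1) S) with heq | hmem
  · exact absurd h (by rw [threshold, heq]; omega)
  · exact hmem

lemma one_le_threshold (hS : ∀ i ∈ S, 1 ≤ i) : 1 ≤ threshold N S := by
  by_cases h : threshold N S ≤ N
  · exact hS _ (threshold_mem_of_le h)
  · omega

lemma mem_of_threshold_le (hup : ∀ i i', i ∈ S → i < i' → i' ≤ N → i' ∈ S) (hiN : i ≤ N)
    (hle : threshold N S ≤ i) : i ∈ S := by
  have hmem := threshold_mem_of_le (hle.trans hiN)
  rcases hle.eq_or_lt with heq | hlt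
  · exact heq ▸ hmem
  · exact hup _ _ hmem hlt hiN

end Threshold

lemma gphi_adj_inl_inr {p q : ℕ × ℕ} :
    Gphi.Adj (Sum.inl p) (Sum.inr q) ↔ p.1 ≤ q.1 ∧ q.2 ≤ p.2 := by
  obtain ⟨i, j⟩ := p
  obtain ⟨i', j'⟩ := q
  simp [Gphi, SimpleGraph.fromRel_adj]

lemma gphi_not_adj_inl_inl (p q : ℕ × ℕ) : ¬ Gphi.Adj (Sum.inl p) (Sum.inl q) := by
  simp [Gphi, SimpleGraph.fromRel_adj]

lemma gphi_not_adj_inr_inr (p q : ℕ × ℕ) : ¬ Gphi.Adj (Sum.inr p) (Sum.inr q) := by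
  simp [Gphi, SimpleGraph.fromRel_adj]

lemma isIndepSetOf_pairVerts_iff {A B : Finset (ℕ × ℕ)} :
    IsIndepSetOf Gphi (pairVerts A B) ↔ ∀ p ∈ A, ∀ q ∈ B, ¬ (p.1 ≤ q.1 ∧ q.2 ≤ p.2) := by
  refine ⟨fun h p hp q hq hpq => ?_, fun h a ha b hb => ?_⟩
  · exact h _ (Or.inl ⟨p, hp, rfl⟩) _ (Or.inr ⟨q, hq, rfl⟩) (gphi_adj_inl_inr.2 hpq)
  · rcases ha with ⟨p, hp, rfl⟩ | ⟨p, hp, rfl⟩ <;> rcases hb with ⟨q, hq, rfl⟩ | ⟨q, hq, rfl⟩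
    · exact gphi_not_adj_inl_inl p q
    · exact fun hpq => h p hp q hq (gphi_adj_inl_inr.1 hpq)
    · exact fun hpq => h q hq p hp (gphi_adj_inl_inr.1 hpq.symm)
    · exact gphi_not_adj_inr_inr p q

namespace InducedBy

variable {N : ℕ} {α β : ℕ → ℕ} {A B : Finset (ℕ × ℕ)}

lemma mem_left (h : InducedBy N α β A B) {i j : ℕ} :
    (i, j) ∈ A ↔ i ∈ Icc 1 N ∧ j ∈ Icc 1 N ∧ α j ≤ i := by
  rw [h.1, mem_filter, mem_product, and_assoc]

lemma mem_right (h : InducedBy N α β A B) {i j : ℕ} :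
    (i, j) ∈ B ↔ i ∈ Icc 1 N ∧ j ∈ Icc 1 N ∧ β i ≤ j := by
  rw [h.2, mem_filter, mem_product, and_assoc]

lemma monoPair (h : InducedBy N α β A B) : MonoPair N A B := by
  refine ⟨fun i j i' hij hlt hle => ?_, fun i j j' hij hlt hle => ?_⟩
  · simp only [h.mem_left, mem_Icc] at hij ⊢
    omega
  · simp only [h.mem_right, mem_Icc] at hij ⊢
    omega

lemma properPair {f g : ℕ → ℕ → ℝ} (h : InducedBy N α β A B) (hv : ValidPair N α β)
    (hp : ProperPairFn N f g α β) : ProperPair N f g A B := by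
  refine ⟨fun i j hij hmin => ?_, fun i j hij hmin => ?_⟩
  · obtain ⟨hi, hj, hαj⟩ := h.mem_left.1 hij
    rw [mem_Icc] at hi
    have hα := (mem_Icc.1 (hv.1 j hj)).1
    obtain rfl : α j = i := by
      by_contra hne
      exact hmin (α j) (by omega) (h.mem_left.2 ⟨mem_Icc.2 ⟨hα, by omega⟩, hj, le_rfl⟩)
    exact hp.1 j hj hi.2
  · obtain ⟨hi, hj, hβi⟩ := h.mem_right.1 hij
    rw [mem_Icc] at hj
    have hβ := (mem_Icc.1 (hv.2.1 i hi)).1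
    obtain rfl : β i = j := by
      by_contra hne
      exact hmin (β i) (by omega) (h.mem_right.2 ⟨hi, mem_Icc.2 ⟨hβ, by omega⟩, le_rfl⟩)
    exact hp.2 i hi hj.2

lemma isIndepSetOf (h : InducedBy N α β A B) (hv : ValidPair N α β) :
    IsIndepSetOf Gphi (pairVerts A B) := by
  rw [isIndepSetOf_pairVerts_iff]
  rintro ⟨i, j⟩ hijA ⟨i', j'⟩ hijB ⟨hii', hjj'⟩
  obtain ⟨-, hj, hαj⟩ := h.mem_left.1 hijA
  obtain ⟨hi', -, hβi'⟩ := h.mem_right.1 hijB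
  have := hv.2.2 i' hi' j hj (hβi'.trans hjj')
  omega

end InducedBy

section LeastElements

variable {N : ℕ} {A B : Finset (ℕ × ℕ)}

noncomputable def colThreshold (N : ℕ) (A : Finset (ℕ × ℕ)) (j : ℕ) : ℕ :=
  threshold N {i | (i, j) ∈ A}

noncomputable def rowThreshold (N : ℕ) (B : Finset (ℕ × ℕ)) (i : ℕ) : ℕ :=
  threshold N {j | (i, j) ∈ B}

lemma mem_iff_colThreshold_le (hA : A ⊆ Icc 1 N ×ˢ Icc 1 N)
    (hm : ∀ i j i', (i, j) ∈ A → i < i' → i' ≤ N → (i', j) ∈ A) {i j : ℕ} :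
    (i, j) ∈ A ↔ (i ∈ Icc 1 N ∧ j ∈ Icc 1 N) ∧ colThreshold N A j ≤ i :=
  ⟨fun hij => ⟨mem_product.1 (hA hij), threshold_le hij⟩,
    fun ⟨⟨hi, _⟩, hle⟩ => mem_of_threshold_le (fun i i' => hm i j i') (mem_Icc.1 hi).2 hle⟩

lemma mem_iff_rowThreshold_le (hB : B ⊆ Icc 1 N ×ˢ Icc 1 N)
    (hm : ∀ i j j', (i, j) ∈ B → j < j' → j' ≤ N → (i, j') ∈ B) {i j : ℕ} :
    (i, j) ∈ B ↔ (i ∈ Icc 1 N ∧ j ∈ Icc 1 N) ∧ rowThreshold N B i ≤ j :=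
  ⟨fun hij => ⟨mem_product.1 (hB hij), threshold_le hij⟩,
    fun ⟨⟨_, hj⟩, hle⟩ => mem_of_threshold_le (fun j j' => hm i j j') (mem_Icc.1 hj).2 hle⟩

lemma inducedBy_thresholds (hA : A ⊆ Icc 1 N ×ˢ Icc 1 N) (hB : B ⊆ Icc 1 N ×ˢ Icc 1 N)
    (hm : MonoPair N A B) : InducedBy N (colThreshold N A) (rowThreshold N B) A B := by
  refine ⟨?_, ?_⟩ <;> ext ⟨i, j⟩ <;> simp only [mem_filter, mem_product]
  · exact mem_iff_colThreshold_le hA hm.1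
  · exact mem_iff_rowThreshold_le hB hm.2

lemma validPair_thresholds (hA : A ⊆ Icc 1 N ×ˢ Icc 1 N) (hB : B ⊆ Icc 1 N ×ˢ Icc 1 N)
    (hm : MonoPair N A B) (hind : IsIndepSetOf Gphi (pairVerts A B)) :
    ValidPair N (colThreshold N A) (rowThreshold N B) := by
  refine ⟨fun j _ => mem_Icc.2 ⟨one_le_threshold ?_, threshold_le_succ _ _⟩,
    fun i _ => mem_Icc.2 ⟨one_le_threshold ?_, threshold_le_succ _ _⟩, fun i hi j hj hβ => ?_⟩
  · exact fun i hi => (mem_Icc.1 (mem_product.1 (hA hi)).1).1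
  · exact fun j hj => (mem_Icc.1 (mem_product.1 (hB hj)).2).1
  · by_contra! hα
    exact isIndepSetOf_pairVerts_iff.1 hind (i, j)
      ((mem_iff_colThreshold_le hA hm.1).2 ⟨⟨hi, hj⟩, hα⟩) (i, j)
      ((mem_iff_rowThreshold_le hB hm.2).2 ⟨⟨hi, hj⟩, hβ⟩) ⟨le_rfl, le_rfl⟩

lemma ProperPair.properPairFn_thresholds {f g : ℕ → ℕ → ℝ} (hp : ProperPair N f g A B) :
    ProperPairFn N f g (colThreshold N A) (rowThreshold N B) :=
  ⟨fun j _ hle => hp.1 _ j (threshold_mem_of_le hle) fun _ h => notMem_of_lt_threshold h,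
    fun i _ hle => hp.2 i _ (threshold_mem_of_le hle) fun _ h => notMem_of_lt_threshold h⟩

end LeastElements

theorem inPi_iff_monotone_proper_indep_general
    (N : ℕ) (f g : ℕ → ℕ → ℝ)
    (A B : Finset (ℕ × ℕ))
    (hA : A ⊆ Finset.Icc 1 N ×ˢ Finset.Icc 1 N)
    (hB : B ⊆ Finset.Icc 1 N ×ˢ Finset.Icc 1 N) :
    InPi N f g A B ↔
      (MonoPair N A B ∧ ProperPair N f g A B ∧
        IsIndepSetOf Gphi (pairVerts A B)) := by
  constructor
  · rintro ⟨α, β, hv, hp, h⟩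
    exact ⟨h.monoPair, h.properPair hv hp, h.isIndepSetOf hv⟩
  · rintro ⟨hm, hp, hind⟩
    exact ⟨_, _, validPair_thresholds hA hB hm hind, hp.properPairFn_thresholds,
      inducedBy_thresholds hA hB hm⟩

/-- `(A,B) ∈ Π(φ)` iff `(A,B)` is monotone and proper and the
corresponding vertex set is an independent set of the bipartite graph `G^φ`. -/
theorem inPi_iff_monotone_proper_indep
    (N : ℕ) (φ f g : ℕ → ℕ → ℝ)
    (hφ : ∀ i j, 0 ≤ φ i j)
    (hφsum : ∑ i ∈ Finset.Icc 1 N, ∑ j ∈ Finset.Icc 1 N, φ i j = 1)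
    (hf : ∀ i j, f i j =
      max ((i : ℝ) * ∑ i' ∈ Finset.Icc i N, φ i' j
            - ∑ i' ∈ Finset.Icc (i + 1) N, f i' j) 0)
    (hg : ∀ i j, g i j =
      max ((j : ℝ) * ∑ j' ∈ Finset.Icc j N, φ i j'
            - ∑ j' ∈ Finset.Icc (j + 1) N, g i j') 0)
    (A B : Finset (ℕ × ℕ))
    (hA : A ⊆ Finset.Icc 1 N ×ˢ Finset.Icc 1 N)
    (hB : B ⊆ Finset.Icc 1 N ×ˢ Finset.Icc 1 N)
    (hdisj : Disjoint A B) :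
    InPi N f g A B ↔
      (MonoPair N A B ∧ ProperPair N f g A B ∧
        IsIndepSetOf Gphi (pairVerts A B)) :=
  inPi_iff_monotone_proper_indep_general N f g A B hA hB
end

section
/- Let S be an independent set of the bipartite graph G^φ and define its monotone closure S↑ = {u_{i',j} : there exists i ≤ i' with u_{i,j} ∈ S} ∪ {w_{i,j'} : there exists j ≤ j' with w_{i,j} ∈ S}. Then S↑ is also an independent set of G^φ, and since all vertex weights are nonnegative, the weight of S↑ is at least the weight of S. -/
/-- All vertices of `G^φ`: both parts are indexed by `[N]×[N]`. -/
def gridVerts (N : ℕ) : Set ((ℕ × ℕ) ⊕ (ℕ × ℕ)) :=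
  (Sum.inl '' ((Finset.Icc 1 N ×ˢ Finset.Icc 1 N : Finset (ℕ × ℕ)) : Set (ℕ × ℕ))) ∪
  (Sum.inr '' ((Finset.Icc 1 N ×ˢ Finset.Icc 1 N : Finset (ℕ × ℕ)) : Set (ℕ × ℕ)))

/-- The weight of a set of vertices: `u_{i,j}` weighs `f(i,j)`, `w_{i,j}`
weighs `g(i,j)`. -/
def vertWeight (f g : ℕ → ℕ → ℝ) (S : Finset ((ℕ × ℕ) ⊕ (ℕ × ℕ))) : ℝ :=
  ∑ v ∈ S, Sum.elim (fun p => f p.1 p.2) (fun p => g p.1 p.2) v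

/-- The monotone (upward) closure `S↑` of a vertex set `S`:
`u_{i',j} ∈ S↑` iff `i' ∈ [N]` and there is `i ≤ i'` with `u_{i,j} ∈ S`,
and symmetrically for the `w`-part. -/
def upClosure (N : ℕ) (S : Finset ((ℕ × ℕ) ⊕ (ℕ × ℕ))) :
    Finset ((ℕ × ℕ) ⊕ (ℕ × ℕ)) :=
  ((Finset.Icc 1 N ×ˢ Finset.Icc 1 N).filter
      (fun p => ∃ i ∈ Finset.Iic p.1, Sum.inl (i, p.2) ∈ S)).image Sum.inl ∪
  ((Finset.Icc 1 N ×ˢ Finset.Icc 1 N).filter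
      (fun p => ∃ j ∈ Finset.Iic p.2, Sum.inr (p.1, j) ∈ S)).image Sum.inr

/-! Raising the first index of a `u`-vertex or the second index of a `w`-vertex only
shrinks its neighbourhood, so an edge of `G^φ` inside `S↑` pulls back to an edge inside `S`;
the weight inequality is monotonicity of a sum of nonnegative terms, the weights being
nonnegative because they are defined as maxima with `0`. -/

open Finset

lemma Gphi_adj_inl_inr {i j i' j' : ℕ} :
    Gphi.Adj (Sum.inl (i, j)) (Sum.inr (i', j')) ↔ i ≤ i' ∧ j' ≤ j := by
  simp [Gphi, SimpleGraph.fromRel_adj]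

lemma isIndepSetOf_Gphi_iff {s : Set ((ℕ × ℕ) ⊕ (ℕ × ℕ))} :
    IsIndepSetOf Gphi s ↔
      ∀ i j i' j', Sum.inl (i, j) ∈ s → Sum.inr (i', j') ∈ s → ¬ (i ≤ i' ∧ j' ≤ j) := by
  refine ⟨fun h i j i' j' hu hw => Gphi_adj_inl_inr.not.mp (h _ hu _ hw), fun h a ha b hb => ?_⟩
  rintro ⟨-, ⟨i, j, i', j', rfl, rfl, hle⟩ | ⟨i, j, i', j', rfl, rfl, hle⟩⟩
  · exact h i j i' j' ha hb hle
  · exact h i j i' j' hb ha hle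

lemma inl_mem_gridVerts {N : ℕ} {p : ℕ × ℕ} :
    Sum.inl p ∈ gridVerts N ↔ p ∈ Icc 1 N ×ˢ Icc 1 N := by
  simp only [gridVerts, Set.mem_union, Set.mem_image, mem_coe, Sum.inl.injEq, reduceCtorEq,
    exists_eq_right, and_false, exists_false, or_false]

lemma inr_mem_gridVerts {N : ℕ} {p : ℕ × ℕ} :
    Sum.inr p ∈ gridVerts N ↔ p ∈ Icc 1 N ×ˢ Icc 1 N := by
  simp only [gridVerts, Set.mem_union, Set.mem_image, mem_coe, Sum.inr.injEq, reduceCtorEq,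
    exists_eq_right, and_false, exists_false, false_or]

section upClosure

variable {N : ℕ} {S : Finset ((ℕ × ℕ) ⊕ (ℕ × ℕ))}

lemma inl_mem_upClosure {p : ℕ × ℕ} :
    Sum.inl p ∈ upClosure N S ↔
      p ∈ Icc 1 N ×ˢ Icc 1 N ∧ ∃ i ≤ p.1, Sum.inl (i, p.2) ∈ S := by
  simp [upClosure]

lemma inr_mem_upClosure {p : ℕ × ℕ} :
    Sum.inr p ∈ upClosure N S ↔
      p ∈ Icc 1 N ×ˢ Icc 1 N ∧ ∃ j ≤ p.2, Sum.inr (p.1, j) ∈ S := by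
  simp [upClosure]

lemma subset_upClosure (hS : (S : Set ((ℕ × ℕ) ⊕ (ℕ × ℕ))) ⊆ gridVerts N) :
    S ⊆ upClosure N S := by
  intro v hv
  rcases v with p | p
  · exact inl_mem_upClosure.mpr ⟨inl_mem_gridVerts.mp (hS hv), p.1, le_rfl, hv⟩
  · exact inr_mem_upClosure.mpr ⟨inr_mem_gridVerts.mp (hS hv), p.2, le_rfl, hv⟩

lemma isIndepSetOf_upClosure (hind : IsIndepSetOf Gphi (S : Set ((ℕ × ℕ) ⊕ (ℕ × ℕ)))) :
    IsIndepSetOf Gphi (upClosure N S : Set ((ℕ × ℕ) ⊕ (ℕ × ℕ))) := by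
  rw [isIndepSetOf_Gphi_iff] at hind ⊢
  rintro i j i' j' hu hw ⟨hi, hj⟩
  obtain ⟨-, i₀, hi₀, hu₀⟩ := inl_mem_upClosure.mp hu
  obtain ⟨-, j₀, hj₀, hw₀⟩ := inr_mem_upClosure.mp hw
  exact hind i₀ j i' j₀ hu₀ hw₀ ⟨hi₀.trans hi, hj₀.trans hj⟩

end upClosure

lemma vertWeight_mono {f g : ℕ → ℕ → ℝ} (hf : ∀ i j, 0 ≤ f i j) (hg : ∀ i j, 0 ≤ g i j)
    {S T : Finset ((ℕ × ℕ) ⊕ (ℕ × ℕ))} (hST : S ⊆ T) :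
    vertWeight f g S ≤ vertWeight f g T :=
  sum_le_sum_of_subset_of_nonneg hST fun v _ _ => by
    rcases v with p | p
    exacts [hf p.1 p.2, hg p.1 p.2]

theorem upClosure_indep_and_weight_general
    (N : ℕ) (φ f g : ℕ → ℕ → ℝ)
    (hf : ∀ i j, f i j =
      max ((i : ℝ) * ∑ i' ∈ Finset.Icc i N, φ i' j
            - ∑ i' ∈ Finset.Icc (i + 1) N, f i' j) 0)
    (hg : ∀ i j, g i j =
      max ((j : ℝ) * ∑ j' ∈ Finset.Icc j N, φ i j'
            - ∑ j' ∈ Finset.Icc (j + 1) N, g i j') 0)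
    (S : Finset ((ℕ × ℕ) ⊕ (ℕ × ℕ)))
    (hS : (S : Set ((ℕ × ℕ) ⊕ (ℕ × ℕ))) ⊆ gridVerts N)
    (hind : IsIndepSetOf Gphi (S : Set ((ℕ × ℕ) ⊕ (ℕ × ℕ)))) :
    IsIndepSetOf Gphi ((upClosure N S : Finset ((ℕ × ℕ) ⊕ (ℕ × ℕ))) :
        Set ((ℕ × ℕ) ⊕ (ℕ × ℕ))) ∧
    vertWeight f g S ≤ vertWeight f g (upClosure N S) := by
  have hf₀ : ∀ i j, 0 ≤ f i j := fun i j => hf i j ▸ le_max_right _ _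
  have hg₀ : ∀ i j, 0 ≤ g i j := fun i j => hg i j ▸ le_max_right _ _
  exact ⟨isIndepSetOf_upClosure hind, vertWeight_mono hf₀ hg₀ (subset_upClosure hS)⟩

/-- the monotone closure `S↑` of an independent set `S` of `G^φ`
is again independent, and (all vertex weights being nonnegative) its weight is
at least the weight of `S`. -/
theorem upClosure_indep_and_weight
    (N : ℕ) (φ f g : ℕ → ℕ → ℝ)
    (hφ : ∀ i j, 0 ≤ φ i j)
    (hφsum : ∑ i ∈ Finset.Icc 1 N, ∑ j ∈ Finset.Icc 1 N, φ i j = 1)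
    (hf : ∀ i j, f i j =
      max ((i : ℝ) * ∑ i' ∈ Finset.Icc i N, φ i' j
            - ∑ i' ∈ Finset.Icc (i + 1) N, f i' j) 0)
    (hg : ∀ i j, g i j =
      max ((j : ℝ) * ∑ j' ∈ Finset.Icc j N, φ i j'
            - ∑ j' ∈ Finset.Icc (j + 1) N, g i j') 0)
    (S : Finset ((ℕ × ℕ) ⊕ (ℕ × ℕ)))
    (hS : (S : Set ((ℕ × ℕ) ⊕ (ℕ × ℕ))) ⊆ gridVerts N)
    (hind : IsIndepSetOf Gphi (S : Set ((ℕ × ℕ) ⊕ (ℕ × ℕ)))) :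
    IsIndepSetOf Gphi ((upClosure N S : Finset ((ℕ × ℕ) ⊕ (ℕ × ℕ))) :
        Set ((ℕ × ℕ) ⊕ (ℕ × ℕ))) ∧
    vertWeight f g S ≤ vertWeight f g (upClosure N S) :=
  upClosure_indep_and_weight_general N φ f g hf hg S hS hind
end

section
/- The optimal profit over all proper valid allocation pairs equals the maximum weight of an independent set in G^φ: max_{(A,B) ∈ Π(φ)} ( Σ_{(i,j)∈A} f(i,j) + Σ_{(i,j)∈B} g(i,j) ) = max { Σ_{u_{i,j} ∈ S} f(i,j) + Σ_{w_{i,j} ∈ S} g(i,j) : S an independent set of G^φ }. -/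
open Finset

abbrev grid (N : ℕ) : Finset (ℕ × ℕ) := Icc 1 N ×ˢ Icc 1 N

section Graph

variable {p q : ℕ × ℕ}

theorem Gphi_adj_inl_inr_s6 : Gphi.Adj (.inl p) (.inr q) ↔ p.1 ≤ q.1 ∧ q.2 ≤ p.2 := by
  obtain ⟨i, j⟩ := p
  obtain ⟨i', j'⟩ := q
  simp [Gphi, SimpleGraph.fromRel_adj]

theorem Gphi_not_adj_inl_inl : ¬ Gphi.Adj (.inl p) (.inl q) := by
  simp [Gphi, SimpleGraph.fromRel_adj]

theorem Gphi_not_adj_inr_inr : ¬ Gphi.Adj (.inr p) (.inr q) := by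
  simp [Gphi, SimpleGraph.fromRel_adj]

variable {A B : Finset (ℕ × ℕ)}

theorem isIndepSetOf_Gphi_disjSum :
    IsIndepSetOf Gphi ↑(A.disjSum B) ↔ ∀ p ∈ A, ∀ q ∈ B, ¬ (p.1 ≤ q.1 ∧ q.2 ≤ p.2) := by
  simp only [IsIndepSetOf, Sum.forall, mem_coe, inl_mem_disjSum, inr_mem_disjSum,
    Gphi_not_adj_inl_inl, Gphi_not_adj_inr_inr, Gphi.adj_comm (.inr _) (.inl _), Gphi_adj_inl_inr_s6]
  grind

theorem coe_disjSum_subset_gridVerts {N : ℕ} :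
    ↑(A.disjSum B) ⊆ gridVerts N ↔ A ⊆ grid N ∧ B ⊆ grid N := by
  simp only [Set.subset_def, gridVerts, Sum.forall, mem_coe, inl_mem_disjSum, inr_mem_disjSum,
    Set.mem_union, Set.mem_image, Sum.inl.injEq, Sum.inr.injEq, reduceCtorEq, and_false,
    exists_false, or_false, false_or, exists_eq_right]
  rfl

theorem vertWeight_disjSum (f g : ℕ → ℕ → ℝ) :
    vertWeight f g (A.disjSum B) = ∑ p ∈ A, f p.1 p.2 + ∑ q ∈ B, g q.1 q.2 :=
  sum_disjSum _ _ _

end Graph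

section Allocation

variable {N : ℕ} {f g : ℕ → ℕ → ℝ} {A B : Finset (ℕ × ℕ)}

theorem InPi.disjSum_subset_gridVerts (h : InPi N f g A B) : ↑(A.disjSum B) ⊆ gridVerts N := by
  obtain ⟨α, β, -, -, rfl, rfl⟩ := h
  exact coe_disjSum_subset_gridVerts.2 ⟨filter_subset _ _, filter_subset _ _⟩

theorem InPi.isIndepSetOf_Gphi_disjSum (h : InPi N f g A B) :
    IsIndepSetOf Gphi ↑(A.disjSum B) := by
  obtain ⟨α, β, ⟨-, -, hcross⟩, -, rfl, rfl⟩ := h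
  simp only [isIndepSetOf_Gphi_disjSum, mem_filter, mem_product]
  rintro p ⟨⟨-, hp₂⟩, hαp⟩ q ⟨⟨hq₁, -⟩, hβq⟩ ⟨h₁, h₂⟩
  have := hcross q.1 hq₁ p.2 hp₂ (hβq.trans h₂)
  omega

def leastInIcc (N : ℕ) (P : ℕ → Prop) [DecidablePred P] : ℕ :=
  (insert (N + 1) {i ∈ Icc 1 N | P i}).min' (insert_nonempty _ _)

section leastInIcc

variable {P : ℕ → Prop} [DecidablePred P]

theorem leastInIcc_mem_Icc : leastInIcc N P ∈ Icc 1 (N + 1) := by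
  have hmem := min'_mem (insert (N + 1) {i ∈ Icc 1 N | P i}) (insert_nonempty _ _)
  have hle := min'_le (insert (N + 1) {i ∈ Icc 1 N | P i}) (N + 1) (mem_insert_self _ _)
  simp only [mem_insert, mem_filter, mem_Icc] at hmem ⊢
  unfold leastInIcc
  omega

theorem leastInIcc_le {i : ℕ} (hi : i ∈ Icc 1 N) (hP : P i) : leastInIcc N P ≤ i :=
  min'_le _ _ (mem_insert_of_mem (mem_filter.2 ⟨hi, hP⟩))

theorem leastInIcc_spec (h : leastInIcc N P ≤ N) : P (leastInIcc N P) := by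
  have hmem := min'_mem (insert (N + 1) {i ∈ Icc 1 N | P i}) (insert_nonempty _ _)
  rw [mem_insert, mem_filter] at hmem
  rcases hmem with hmem | hmem
  · exact absurd (hmem ▸ h : N + 1 ≤ N) (by omega)
  · exact hmem.2

end leastInIcc

theorem exists_inPi_superset {A₀ B₀ : Finset (ℕ × ℕ)} (hA₀ : A₀ ⊆ grid N) (hB₀ : B₀ ⊆ grid N)
    (hfA₀ : ∀ p ∈ A₀, 0 < f p.1 p.2) (hgB₀ : ∀ q ∈ B₀, 0 < g q.1 q.2)
    (hcross : ∀ p ∈ A₀, ∀ q ∈ B₀, ¬ (p.1 ≤ q.1 ∧ q.2 ≤ p.2)) :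
    ∃ A B, InPi N f g A B ∧ A₀ ⊆ A ∧ B₀ ⊆ B := by
  set α : ℕ → ℕ := fun j => leastInIcc N (fun i => (i, j) ∈ A₀)
  set β : ℕ → ℕ := fun i => leastInIcc N (fun j => (i, j) ∈ B₀)
  have valid : ValidPair N α β := by
    refine ⟨fun _ _ => leastInIcc_mem_Icc, fun _ _ => leastInIcc_mem_Icc, fun i hi j hj hβ => ?_⟩
    by_contra! hα
    exact hcross _ (leastInIcc_spec (hα.trans (mem_Icc.1 hi).2)) _
      (leastInIcc_spec (hβ.trans (mem_Icc.1 hj).2)) ⟨hα, hβ⟩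
  have proper : ProperPairFn N f g α β :=
    ⟨fun _ _ h => hfA₀ _ (leastInIcc_spec h), fun _ _ h => hgB₀ _ (leastInIcc_spec h)⟩
  refine ⟨_, _, ⟨α, β, valid, proper, rfl, rfl⟩, fun p hp => ?_, fun q hq => ?_⟩
  · exact mem_filter.2 ⟨hA₀ hp, leastInIcc_le (mem_product.1 (hA₀ hp)).1 hp⟩
  · exact mem_filter.2 ⟨hB₀ hq, leastInIcc_le (mem_product.1 (hB₀ hq)).2 hq⟩

theorem exists_inPi_vertWeight_le (hf₀ : ∀ i j, 0 ≤ f i j) (hg₀ : ∀ i j, 0 ≤ g i j)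
    {S : Finset ((ℕ × ℕ) ⊕ (ℕ × ℕ))} (hS : ↑S ⊆ gridVerts N) (hind : IsIndepSetOf Gphi ↑S) :
    ∃ A B, InPi N f g A B ∧ vertWeight f g S ≤ ∑ p ∈ A, f p.1 p.2 + ∑ q ∈ B, g q.1 q.2 := by
  rw [← S.toLeft_disjSum_toRight] at hS hind ⊢
  rw [coe_disjSum_subset_gridVerts] at hS
  rw [isIndepSetOf_Gphi_disjSum] at hind
  set A₀ := {p ∈ S.toLeft | 0 < f p.1 p.2}
  set B₀ := {q ∈ S.toRight | 0 < g q.1 q.2}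
  obtain ⟨A, B, hAB, hA, hB⟩ := exists_inPi_superset
    ((filter_subset _ _).trans hS.1) ((filter_subset _ _).trans hS.2)
    (fun p hp => (mem_filter.1 hp).2) (fun q hq => (mem_filter.1 hq).2)
    (fun p hp q hq => hind p (mem_filter.1 hp).1 q (mem_filter.1 hq).1)
  refine ⟨A, B, hAB, ?_⟩
  calc vertWeight f g (S.toLeft.disjSum S.toRight)
      = ∑ p ∈ A₀, f p.1 p.2 + ∑ q ∈ B₀, g q.1 q.2 := by
        rw [vertWeight_disjSum, sum_filter_of_ne fun p _ h => (hf₀ _ _).lt_of_ne' h,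
          sum_filter_of_ne fun q _ h => (hg₀ _ _).lt_of_ne' h]
    _ ≤ ∑ p ∈ A, f p.1 p.2 + ∑ q ∈ B, g q.1 q.2 :=
        add_le_add (sum_le_sum_of_subset_of_nonneg hA fun _ _ _ => hf₀ _ _)
          (sum_le_sum_of_subset_of_nonneg hB fun _ _ _ => hg₀ _ _)

end Allocation

theorem optimal_profit_eq_max_weight_indep_general
    (N : ℕ) (φ f g : ℕ → ℕ → ℝ)
    (hf : ∀ i j, f i j =
      max ((i : ℝ) * ∑ i' ∈ Finset.Icc i N, φ i' j
            - ∑ i' ∈ Finset.Icc (i + 1) N, f i' j) 0)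
    (hg : ∀ i j, g i j =
      max ((j : ℝ) * ∑ j' ∈ Finset.Icc j N, φ i j'
            - ∑ j' ∈ Finset.Icc (j + 1) N, g i j') 0) :
    sSup {r : ℝ | ∃ A B : Finset (ℕ × ℕ), InPi N f g A B ∧
        r = (∑ p ∈ A, f p.1 p.2) + (∑ p ∈ B, g p.1 p.2)}
    = sSup {r : ℝ | ∃ S : Finset ((ℕ × ℕ) ⊕ (ℕ × ℕ)),
        (S : Set ((ℕ × ℕ) ⊕ (ℕ × ℕ))) ⊆ gridVerts N ∧
        IsIndepSetOf Gphi (S : Set ((ℕ × ℕ) ⊕ (ℕ × ℕ))) ∧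
        r = vertWeight f g S} := by
  have hf₀ : ∀ i j, 0 ≤ f i j := fun i j => (hf i j).symm ▸ le_max_right _ _
  have hg₀ : ∀ i j, 0 ≤ g i j := fun i j => (hg i j).symm ▸ le_max_right _ _
  refine csSup_eq_csSup_of_forall_exists_le ?_ ?_
  · rintro _ ⟨A, B, hAB, rfl⟩
    exact ⟨_, ⟨A.disjSum B, hAB.disjSum_subset_gridVerts, hAB.isIndepSetOf_Gphi_disjSum, rfl⟩,
      (vertWeight_disjSum f g).ge⟩
  · rintro _ ⟨S, hS, hind, rfl⟩
    obtain ⟨A, B, hAB, hle⟩ := exists_inPi_vertWeight_le hf₀ hg₀ hS hind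
    exact ⟨_, ⟨A, B, hAB, rfl⟩, hle⟩

/-- the optimal profit over all proper valid allocation pairs
equals the maximum weight of an independent set in `G^φ`. -/
theorem optimal_profit_eq_max_weight_indep
    (N : ℕ) (φ f g : ℕ → ℕ → ℝ)
    (hφ : ∀ i j, 0 ≤ φ i j)
    (hφsum : ∑ i ∈ Finset.Icc 1 N, ∑ j ∈ Finset.Icc 1 N, φ i j = 1)
    (hf : ∀ i j, f i j =
      max ((i : ℝ) * ∑ i' ∈ Finset.Icc i N, φ i' j
            - ∑ i' ∈ Finset.Icc (i + 1) N, f i' j) 0)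
    (hg : ∀ i j, g i j =
      max ((j : ℝ) * ∑ j' ∈ Finset.Icc j N, φ i j'
            - ∑ j' ∈ Finset.Icc (j + 1) N, g i j') 0) :
    sSup {r : ℝ | ∃ A B : Finset (ℕ × ℕ), InPi N f g A B ∧
        r = (∑ p ∈ A, f p.1 p.2) + (∑ p ∈ B, g p.1 p.2)}
    = sSup {r : ℝ | ∃ S : Finset ((ℕ × ℕ) ⊕ (ℕ × ℕ)),
        (S : Set ((ℕ × ℕ) ⊕ (ℕ × ℕ))) ⊆ gridVerts N ∧
        IsIndepSetOf Gphi (S : Set ((ℕ × ℕ) ⊕ (ℕ × ℕ))) ∧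
        r = vertWeight f g S} :=
  optimal_profit_eq_max_weight_indep_general N φ f g hf hg
end

section
/- For every valid allocation pair (α,β) there exists a proper valid allocation pair (α',β') (with α' ≥ α and β' ≥ β pointwise) such that Profit(α',β',φ) ≥ Profit(α,β,φ). -/
open MeasureTheory

/-- Expected revenue from bidder 1 at price `x` when bidder 2's value is `y`. -/
noncomputable def RevF (φ : ℝ → ℝ → ℝ) (x y : ℝ) : ℝ := x * ∫ t in x..1, φ t y

/-- Expected revenue from bidder 2 at price `y` when bidder 1's value is `x`. -/
noncomputable def RevG (φ : ℝ → ℝ → ℝ) (x y : ℝ) : ℝ := y * ∫ t in y..1, φ x t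

/-- A valid allocation pair: Borel measurable `α, β : [0,1] → [0,1]` with the
non-crossing property. -/
def ValidPairC (α β : ℝ → ℝ) : Prop :=
  Measurable α ∧ Measurable β ∧
  (∀ y ∈ Set.Icc (0:ℝ) 1, α y ∈ Set.Icc (0:ℝ) 1) ∧
  (∀ x ∈ Set.Icc (0:ℝ) 1, β x ∈ Set.Icc (0:ℝ) 1) ∧
  (∀ x ∈ Set.Icc (0:ℝ) 1, ∀ y ∈ Set.Icc (0:ℝ) 1, β x ≤ y → x ≤ α y)

/-- A valid allocation pair is proper for density `φ`. -/
def ProperPairC (φ : ℝ → ℝ → ℝ) (α β : ℝ → ℝ) : Prop :=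
  (∀ y ∈ Set.Icc (0:ℝ) 1,
    RevF φ (α y) y = sSup ((fun x' => RevF φ x' y) '' Set.Icc (α y) 1)) ∧
  (∀ x ∈ Set.Icc (0:ℝ) 1,
    RevG φ x (β x) = sSup ((fun y' => RevG φ x y') '' Set.Icc (β x) 1))

/-- The profit of the auction with allocation curves `(α,β)` and threshold
payments, for valuation density `φ`. -/
noncomputable def Profit (α β : ℝ → ℝ) (φ : ℝ → ℝ → ℝ) : ℝ :=
  (∫ y in (0:ℝ)..1, RevF φ (α y) y) + (∫ x in (0:ℝ)..1, RevG φ x (β x))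

open Set Function

/-! Raise each allocation curve pointwise to the largest maximizer of the revenue on
`[α y, 1]`. Revenue can only go up, the new value maximizes the revenue on its own upper
interval (properness), and raising both curves preserves non-crossing. The substance is
measurability of the new curve: `c ≤ α' y` iff the maximum over `[max (α y) c, 1]` still
reaches the maximum over `[α y, 1]`, and these maxima depend continuously on the endpoint. -/

theorem isClosed_setOf_isMaxOn {β α : Type*} [TopologicalSpace β] [LinearOrder α]
    [TopologicalSpace α] [OrderClosedTopology α] {f : β → α} {s : Set β} (hf : Continuous f) :
    IsClosed {x | IsMaxOn f s x} := by
  simp only [isMaxOn_iff, ofPred_forall]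
  exact isClosed_biInter fun z _ => isClosed_le continuous_const hf

theorem IsMaxOn.sSup_image_eq {β α : Type*} [ConditionallyCompleteLinearOrder α]
    {f : β → α} {s : Set β} {a : β} (hf : IsMaxOn f s a) (ha : a ∈ s) :
    sSup (f '' s) = f a :=
  IsGreatest.csSup_eq ⟨mem_image_of_mem f ha, forall_mem_image.2 hf⟩

section LastArgmax

variable {X : Type*} (G : ℝ → X → ℝ)

noncomputable def supFrom (a : ℝ) (y : X) : ℝ := sSup ((G · y) '' Icc a 1)

noncomputable def lastArgmaxFrom (a : ℝ) (y : X) : ℝ :=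
  sSup {x ∈ Icc a 1 | IsMaxOn (G · y) (Icc a 1) x}

variable {G} {a : ℝ} {y : X}

theorem lastArgmaxFrom_mem (hG : Continuous (G · y)) (ha : a ≤ 1) :
    lastArgmaxFrom G a y ∈ Icc a 1 ∧
      IsMaxOn (G · y) (Icc a 1) (lastArgmaxFrom G a y) := by
  obtain ⟨x, hx, hmax⟩ :=
    isCompact_Icc.exists_isMaxOn (nonempty_Icc.2 ha) hG.continuousOn
  exact (isCompact_Icc.inter_right (isClosed_setOf_isMaxOn hG)).sSup_mem ⟨x, hx, hmax⟩

theorem le_lastArgmaxFrom {x : ℝ} (hx : x ∈ Icc a 1) (hmax : IsMaxOn (G · y) (Icc a 1) x) :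
    x ≤ lastArgmaxFrom G a y :=
  le_csSup ⟨1, fun _ hz => hz.1.2⟩ ⟨hx, hmax⟩

theorem le_lastArgmaxFrom_iff (hG : Continuous (G · y)) (ha : a ≤ 1) {c : ℝ} (hc : c ≤ 1) :
    c ≤ lastArgmaxFrom G a y ↔ supFrom G a y ≤ supFrom G (max a c) y := by
  obtain ⟨hmem, hmax⟩ := lastArgmaxFrom_mem hG ha
  have hsub : Icc (max a c) 1 ⊆ Icc a 1 := Icc_subset_Icc_left (le_max_left a c)
  have hbdd : BddAbove ((G · y) '' Icc (max a c) 1) :=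
    ⟨_, forall_mem_image.2 fun x hx => hmax (hsub hx)⟩
  unfold supFrom
  rw [hmax.sSup_image_eq hmem]
  constructor
  · exact fun hcm => le_csSup hbdd (mem_image_of_mem _ ⟨max_le hmem.1 hcm, hmem.2⟩)
  · intro hle
    obtain ⟨x, hx, hxmax⟩ :=
      isCompact_Icc.exists_isMaxOn (nonempty_Icc.2 (max_le ha hc)) hG.continuousOn
    rw [hxmax.sSup_image_eq hx] at hle
    have hx_max : IsMaxOn (G · y) (Icc a 1) x := fun z hz => (hmax hz).trans hle
    exact (le_max_right a c).trans (hx.1.trans (le_lastArgmaxFrom (hsub hx) hx_max))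

theorem supFrom_eq_sSup_lineMap (ha : a ≤ 1) :
    supFrom G a y = sSup ((fun t => G (AffineMap.lineMap (k := ℝ) a 1 t) y) '' Icc 0 1) := by
  rw [supFrom, ← segment_eq_Icc ha, segment_eq_image_lineMap, image_image]

variable [TopologicalSpace X] [MeasurableSpace X] [OpensMeasurableSpace X]
  [SecondCountableTopology X]

theorem measurable_supFrom (hG : Continuous ↿G) {b : X → ℝ} (hb : Measurable b)
    (hb1 : ∀ y, b y ≤ 1) : Measurable fun y => supFrom G (b y) y := by
  -- Parametrizing `[a, 1]` by `[0, 1]` makes the maximum jointly continuous in `(a, y)`.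
  let F : ℝ × X → ℝ := fun p =>
    sSup ((fun t => G (AffineMap.lineMap (k := ℝ) p.1 1 t) p.2) '' Icc 0 1)
  have hF : Continuous F := isCompact_Icc.continuous_sSup <| by
    simp only [AffineMap.lineMap_apply_ring']
    fun_prop
  have hsupF : (fun y => supFrom G (b y) y) = F ∘ fun y => (b y, y) :=
    funext fun y => supFrom_eq_sSup_lineMap (hb1 y)
  rw [hsupF]
  exact hF.measurable.comp (hb.prodMk measurable_id)

theorem measurable_lastArgmaxFrom (hG : Continuous ↿G) {b : X → ℝ} (hb : Measurable b)
    (hb1 : ∀ y, b y ≤ 1) : Measurable fun y => lastArgmaxFrom G (b y) y := by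
  have hGy (y : X) : Continuous (G · y) := hG.comp (.prodMk_left y)
  refine measurable_of_Ici fun c => ?_
  by_cases hc : c ≤ 1
  · have hpre : (fun y => lastArgmaxFrom G (b y) y) ⁻¹' Ici c =
        {y | supFrom G (b y) y ≤ supFrom G (max (b y) c) y} := by
      ext y
      exact le_lastArgmaxFrom_iff (hGy y) (hb1 y) hc
    rw [hpre]
    exact measurableSet_le (measurable_supFrom hG hb hb1)
      (measurable_supFrom hG (hb.max measurable_const) fun y => max_le (hb1 y) hc)
  · have hpre : (fun y => lastArgmaxFrom G (b y) y) ⁻¹' Ici c = ∅ :=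
      eq_empty_of_forall_notMem fun y hy =>
        hc (le_trans hy (lastArgmaxFrom_mem (hGy y) (hb1 y)).1.2)
    rw [hpre]
    exact .empty

end LastArgmax

theorem continuous_revF {φ : ℝ → ℝ → ℝ} (hφ : Continuous ↿φ) : Continuous ↿(RevF φ) := by
  have hint : Continuous fun p : ℝ × ℝ => ∫ t in (1 : ℝ)..p.1, φ t p.2 :=
    intervalIntegral.continuous_parametric_intervalIntegral_of_continuous
      (f := fun p t => φ t p.2) (by fun_prop) continuous_fst
  have heq : ↿(RevF φ) = fun p : ℝ × ℝ => p.1 * -∫ t in (1 : ℝ)..p.1, φ t p.2 := by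
    ext p
    show p.1 * ∫ t in p.1..1, φ t p.2 = _
    rw [intervalIntegral.integral_symm]
  rw [heq]
  fun_prop

theorem revF_congr {φ ψ : ℝ → ℝ → ℝ} (h : EqOn ↿φ ↿ψ (Icc 0 1 ×ˢ Icc 0 1)) {x y : ℝ}
    (hx : x ∈ Icc (0 : ℝ) 1) (hy : y ∈ Icc (0 : ℝ) 1) : RevF φ x y = RevF ψ x y := by
  unfold RevF
  congr 1
  refine intervalIntegral.integral_congr fun t ht => h (show (t, y) ∈ _ from ⟨?_, hy⟩)
  rw [uIcc_of_le hx.2] at ht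
  exact ⟨hx.1.trans ht.1, ht.2⟩

theorem ContinuousOn.exists_continuous_eqOn_Icc_prod {φ : ℝ → ℝ → ℝ}
    (hφ : ContinuousOn ↿φ (Icc 0 1 ×ˢ Icc 0 1)) :
    ∃ ψ : ℝ → ℝ → ℝ, Continuous ↿ψ ∧ EqOn ↿φ ↿ψ (Icc 0 1 ×ˢ Icc 0 1) := by
  let proj := fun t : ℝ => (projIcc (0 : ℝ) 1 zero_le_one t : ℝ)
  have hproj : Continuous proj := continuous_subtype_val.comp continuous_projIcc
  refine ⟨fun s t => φ (proj s) (proj t), ?_, fun p hp => ?_⟩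
  · exact hφ.comp_continuous (f := fun p : ℝ × ℝ => (proj p.1, proj p.2)) (by fun_prop)
      fun p => ⟨(projIcc _ _ zero_le_one p.1).2, (projIcc _ _ zero_le_one p.2).2⟩
  · simp [proj, HasUncurry.uncurry, projIcc_of_mem _ hp.1, projIcc_of_mem _ hp.2]

theorem intervalIntegrable_comp_of_mapsTo {G : ℝ → ℝ → ℝ} (hG : Continuous ↿G) {γ : ℝ → ℝ}
    (hγ : Measurable γ) (hγI : MapsTo γ (Icc 0 1) (Icc 0 1)) :
    IntervalIntegrable (fun y => G (γ y) y) volume 0 1 := by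
  obtain ⟨C, hC⟩ :=
    (isCompact_Icc.prod isCompact_Icc : IsCompact (Icc (0 : ℝ) 1 ×ˢ Icc (0 : ℝ) 1))
      |>.exists_bound_of_continuousOn hG.continuousOn
  rw [intervalIntegrable_iff_integrableOn_Icc_of_le zero_le_one]
  refine IntegrableOn.of_bound measure_Icc_lt_top
    (hG.measurable.comp (hγ.prodMk measurable_id)).aestronglyMeasurable C ?_
  filter_upwards [ae_restrict_mem measurableSet_Icc] with y hy
  exact hC (γ y, y) ⟨hγI hy, hy⟩

theorem exists_measurable_isMaxOn_ge {G : ℝ → ℝ → ℝ} (hG : Continuous ↿G) {α : ℝ → ℝ}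
    (hα : Measurable α) (hαI : MapsTo α (Icc 0 1) (Icc 0 1)) :
    ∃ α' : ℝ → ℝ, Measurable α' ∧ MapsTo α' (Icc 0 1) (Icc 0 1) ∧
      ∀ y ∈ Icc (0 : ℝ) 1, α y ≤ α' y ∧ G (α y) y ≤ G (α' y) y ∧
        IsMaxOn (G · y) (Icc (α' y) 1) (α' y) := by
  have hGy (y : ℝ) : Continuous (G · y) := hG.comp (.prodMk_left y)
  -- `α` is only controlled on `[0, 1]`; clamping it keeps `[min (α y) 1, 1]` nonempty for every
  -- `y`, which the measurability argument needs.
  have hb1 (y : ℝ) : min (α y) 1 ≤ 1 := min_le_right _ _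
  have hspec : ∀ y ∈ Icc (0 : ℝ) 1, lastArgmaxFrom G (min (α y) 1) y ∈ Icc (α y) 1 ∧
      IsMaxOn (G · y) (Icc (α y) 1) (lastArgmaxFrom G (min (α y) 1) y) := fun y hy => by
    simpa only [min_eq_left (hαI hy).2] using lastArgmaxFrom_mem (hGy y) (hb1 y)
  refine ⟨fun y => lastArgmaxFrom G (min (α y) 1) y,
    measurable_lastArgmaxFrom hG (hα.min measurable_const) hb1, fun y hy => ?_, fun y hy => ?_⟩
  · obtain ⟨⟨hle, hle1⟩, -⟩ := hspec y hy
    exact ⟨(hαI hy).1.trans hle, hle1⟩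
  · obtain ⟨⟨hle, -⟩, hmax⟩ := hspec y hy
    exact ⟨hle, hmax ⟨le_rfl, (hαI hy).2⟩, hmax.on_subset (Icc_subset_Icc_left hle)⟩

theorem exists_measurable_proper_ge {φ : ℝ → ℝ → ℝ}
    (hφ : ContinuousOn ↿φ (Icc 0 1 ×ˢ Icc 0 1)) {α : ℝ → ℝ} (hα : Measurable α)
    (hαI : MapsTo α (Icc 0 1) (Icc 0 1)) :
    ∃ α' : ℝ → ℝ, Measurable α' ∧ MapsTo α' (Icc 0 1) (Icc 0 1) ∧
      (∀ y ∈ Icc (0 : ℝ) 1, α y ≤ α' y) ∧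
      (∀ y ∈ Icc (0 : ℝ) 1,
        RevF φ (α' y) y = sSup ((fun x' => RevF φ x' y) '' Icc (α' y) 1)) ∧
      ∫ y in (0 : ℝ)..1, RevF φ (α y) y ≤ ∫ y in (0 : ℝ)..1, RevF φ (α' y) y := by
  obtain ⟨ψ, hψ, hφψ⟩ := hφ.exists_continuous_eqOn_Icc_prod
  have hG := continuous_revF hψ
  obtain ⟨α', hα', hα'I, hspec⟩ := exists_measurable_isMaxOn_ge hG hα hαI
  have hintegral_eq {γ : ℝ → ℝ} (hγI : MapsTo γ (Icc 0 1) (Icc 0 1)) :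
      ∫ y in (0 : ℝ)..1, RevF φ (γ y) y = ∫ y in (0 : ℝ)..1, RevF ψ (γ y) y := by
    refine intervalIntegral.integral_congr fun y hy => ?_
    rw [uIcc_of_le zero_le_one] at hy
    exact revF_congr hφψ (hγI hy) hy
  refine ⟨α', hα', hα'I, fun y hy => (hspec y hy).1, fun y hy => ?_, ?_⟩
  · have hsub : Icc (α' y) 1 ⊆ Icc 0 1 := Icc_subset_Icc_left (hα'I hy).1
    rw [image_congr fun x hx => revF_congr hφψ (hsub hx) hy, revF_congr hφψ (hα'I hy) hy]
    exact ((hspec y hy).2.2.sSup_image_eq ⟨le_rfl, (hα'I hy).2⟩).symm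
  · rw [hintegral_eq hαI, hintegral_eq hα'I]
    exact intervalIntegral.integral_mono_on zero_le_one
      (intervalIntegrable_comp_of_mapsTo hG hα hαI)
      (intervalIntegrable_comp_of_mapsTo hG hα' hα'I)
      fun y hy => (hspec y hy).2.1

theorem exists_proper_dominating_general
    (φ : ℝ → ℝ → ℝ) (α β : ℝ → ℝ)
    (hφcont : ContinuousOn (fun p : ℝ × ℝ => φ p.1 p.2)
      (Set.Icc (0:ℝ) 1 ×ˢ Set.Icc (0:ℝ) 1))
    (hvalid : ValidPairC α β) :
    ∃ α' β' : ℝ → ℝ,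
      ValidPairC α' β' ∧ ProperPairC φ α' β' ∧
      (∀ y ∈ Set.Icc (0:ℝ) 1, α y ≤ α' y) ∧
      (∀ x ∈ Set.Icc (0:ℝ) 1, β x ≤ β' x) ∧
      Profit α β φ ≤ Profit α' β' φ := by
  obtain ⟨hα, hβ, hαI, hβI, hcross⟩ := hvalid
  obtain ⟨α', hα', hα'I, hαα', hα'proper, hα'profit⟩ :=
    exists_measurable_proper_ge hφcont hα hαI
  -- `RevG φ x y` is `RevF` of the transposed density at `(y, x)`.
  obtain ⟨β', hβ', hβ'I, hββ', hβ'proper, hβ'profit⟩ :=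
    exists_measurable_proper_ge (φ := fun s t => φ t s)
      (hφcont.comp continuous_swap.continuousOn fun _ hp => ⟨hp.2, hp.1⟩) hβ hβI
  refine ⟨α', β', ⟨hα', hβ', hα'I, hβ'I, fun x hx y hy hxy => ?_⟩, ⟨hα'proper, hβ'proper⟩,
    hαα', hββ', add_le_add hα'profit hβ'profit⟩
  exact (hcross x hx y hy ((hββ' x hx).trans hxy)).trans (hαα' y hy)

/-- any valid allocation pair is (weakly) dominated by a proper
valid allocation pair with pointwise larger allocation curves. -/
theorem exists_proper_dominating
    (φ : ℝ → ℝ → ℝ) (α β : ℝ → ℝ)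
    (hφcont : ContinuousOn (fun p : ℝ × ℝ => φ p.1 p.2)
      (Set.Icc (0:ℝ) 1 ×ˢ Set.Icc (0:ℝ) 1))
    (hφpos : ∀ p ∈ (Set.Icc (0:ℝ) 1 ×ˢ Set.Icc (0:ℝ) 1), 0 < φ p.1 p.2)
    (hvalid : ValidPairC α β) :
    ∃ α' β' : ℝ → ℝ,
      ValidPairC α' β' ∧ ProperPairC φ α' β' ∧
      (∀ y ∈ Set.Icc (0:ℝ) 1, α y ≤ α' y) ∧
      (∀ x ∈ Set.Icc (0:ℝ) 1, β x ≤ β' x) ∧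
      Profit α β φ ≤ Profit α' β' φ :=
  exists_proper_dominating_general φ α β hφcont hvalid
end

section
/- Transshipment upper bound (OPT(D) ≥ OPT(B)): let f, g : [0,1]² → ℝ be nonnegative continuous functions, fix n ≥ 2 with ε = 1/n, and form the grid weights f_d, g_d and the bipartite graph G_n. Suppose y : E(G_n) → ℝ is feasible for Problem D, i.e. y ≥ 0, Σ_{v : (u,v)∈E} y_{uv} ≥ f_d(u) for every u ∈ U, and Σ_{u : (u,v)∈E} y_{uv} ≥ g_d(v) for every v ∈ V. Then there exists a measurable γ feasible for Problem B (with data f, g) whose cost is at most Σ_{(u,v)∈E} y_{uv}. -/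
open MeasureTheory

/-- The grid weight of little square `Q_{ij}` for a function `h` on `[0,1]²`
(`ε = 1/n`). -/
noncomputable def gridWeight (n : ℕ) (h : ℝ → ℝ → ℝ) (i j : Fin n) : ℝ :=
  ∫ x in ((i : ℝ) * (1 / n))..(((i : ℝ) + 1) * (1 / n)),
    ∫ y in ((j : ℝ) * (1 / n))..(((j : ℝ) + 1) * (1 / n)), h x y

/-- `γ` is feasible for Problem B with data `f, g`. -/
def ProblemBFeasible (f g : ℝ → ℝ → ℝ) (γ : ℝ → ℝ → ℝ → ℝ → ℝ) : Prop :=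
  Measurable (fun q : ℝ × ℝ × ℝ × ℝ => γ q.1 q.2.1 q.2.2.1 q.2.2.2) ∧
  (∀ᵐ q : ℝ × ℝ × ℝ × ℝ
      ∂(volume.restrict (Set.Icc (0:ℝ) 1 ×ˢ Set.Icc (0:ℝ) 1 ×ˢ
          Set.Icc (0:ℝ) 1 ×ˢ Set.Icc (0:ℝ) 1)),
    0 ≤ γ q.1 q.2.1 q.2.2.1 q.2.2.2) ∧
  (∀ᵐ p : ℝ × ℝ ∂(volume.restrict (Set.Icc (0:ℝ) 1 ×ˢ Set.Icc (0:ℝ) 1)),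
    f p.1 p.2 ≤ ∫ y₂ in (0:ℝ)..p.2, ∫ x₂ in p.1..1, γ p.1 p.2 x₂ y₂) ∧
  (∀ᵐ p : ℝ × ℝ ∂(volume.restrict (Set.Icc (0:ℝ) 1 ×ˢ Set.Icc (0:ℝ) 1)),
    g p.1 p.2 ≤ ∫ y₁ in p.2..1, ∫ x₁ in (0:ℝ)..p.1, γ x₁ y₁ p.1 p.2)

/-- The cost of a plan `γ` in Problem B. -/
noncomputable def BCost (γ : ℝ → ℝ → ℝ → ℝ → ℝ) : ℝ :=
  ∫ x₁ in (0:ℝ)..1, ∫ y₁ in (0:ℝ)..1, ∫ y₂ in (0:ℝ)..y₁, ∫ x₂ in x₁..1,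
    γ x₁ y₁ x₂ y₂

/-!
Put on each closed cell `Q_u` the density `φ_u` of `f` normalised to unit mass (uniform if `f`
vanishes on `Q_u`), likewise `ψ_v` for `g`, and take `γ = ∑_{(u,v) ∈ E} y_{uv} φ_u ⊗ ψ_v`.
For an edge `(u,v)` the cell `Q_v` lies in the quadrant `[x₁,1] × [0,y₁]` of every point
`(x₁,y₁) ∈ Q_u`, so integrating out `(x₂,y₂)` leaves `∑_u (∑_v y_{uv}) φ_u(x₁,y₁)`, which is at
least `f_d(u) φ_u(x₁,y₁) ≥ f(x₁,y₁)` on `Q_u`. The constraint for `g` is symmetric, and one more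
integration gives the cost `∑ y_{uv}` exactly.
-/

open Set Function

section IteratedIntegral

variable {a b c d : ℝ}

theorem eqOn_zero_of_integral_eq_zero {g : ℝ → ℝ} (hg : Continuous g) (hg0 : 0 ≤ g)
    (hab : a < b) (h : ∫ x in a..b, g x = 0) : EqOn g 0 (Icc a b) := by
  intro x hx
  by_contra hne
  have hpos := intervalIntegral.integral_lt_integral_of_continuousOn_of_le_of_exists_lt
    (f := fun _ => 0) hab continuousOn_const hg.continuousOn (fun x _ => hg0 x)
    ⟨x, hx, lt_of_le_of_ne (hg0 x) (Ne.symm hne)⟩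
  simp [h] at hpos

theorem eq_zero_of_integral_integral_eq_zero {h : ℝ → ℝ → ℝ} (hc : Continuous (uncurry h))
    (hh : ∀ x y, 0 ≤ h x y) (hab : a < b) (hcd : c < d)
    (h0 : ∫ x in a..b, ∫ y in c..d, h x y = 0) {x y : ℝ} (hx : x ∈ Icc a b)
    (hy : y ∈ Icc c d) : h x y = 0 := by
  have hinner : ∫ y in c..d, h x y = 0 :=
    eqOn_zero_of_integral_eq_zero
      (intervalIntegral.continuous_parametric_intervalIntegral_of_continuous' hc c d)
      (fun x => intervalIntegral.integral_nonneg hcd.le fun y _ => hh x y) hab h0 hx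
  exact eqOn_zero_of_integral_eq_zero (hc.uncurry_left x) (hh x) hcd hinner hy

theorem integral_integral_swap_of_continuous {h : ℝ → ℝ → ℝ} (hc : Continuous (uncurry h))
    (hab : a ≤ b) (hcd : c ≤ d) :
    ∫ x in a..b, ∫ y in c..d, h x y = ∫ y in c..d, ∫ x in a..b, h x y := by
  simp only [intervalIntegral.integral_of_le hab, intervalIntegral.integral_of_le hcd]
  refine integral_integral_swap ?_
  have hIcc : IntegrableOn (uncurry h) (Icc a b ×ˢ Icc c d) (volume.prod volume) := by
    rw [← Measure.volume_eq_prod]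
    exact hc.continuousOn.integrableOn_compact (isCompact_Icc.prod isCompact_Icc)
  have hIoc := hIcc.mono_set (prod_mono Ioc_subset_Icc_self Ioc_subset_Icc_self)
  rwa [IntegrableOn, ← Measure.prod_restrict] at hIoc

theorem integral_indicator_Icc_of_le {g : ℝ → ℝ} {p q : ℝ} (hp : p ≤ c) (hcd : c ≤ d)
    (hq : d ≤ q) : ∫ y in p..q, (Icc c d).indicator g y = ∫ y in c..d, g y := by
  rw [intervalIntegral.integral_of_le (hp.trans (hcd.trans hq)),
    intervalIntegral.integral_of_le hcd, ← integral_Icc_eq_integral_Ioc,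
    ← integral_Icc_eq_integral_Ioc, setIntegral_indicator measurableSet_Icc,
    inter_eq_right.2 (Icc_subset_Icc hp hq)]

theorem intervalIntegrable_indicator_Icc {g : ℝ → ℝ} (hg : Continuous g) (p q : ℝ) :
    IntervalIntegrable ((Icc c d).indicator g) volume p q :=
  (hg.integrableOn_uIcc.indicator measurableSet_Icc).intervalIntegrable

structure IteratedUnitMass (F : ℝ → ℝ → ℝ) (a b c d : ℝ) : Prop where
  intervalIntegrable_slice : ∀ x, IntervalIntegrable (F x) volume c d
  intervalIntegrable_integral : IntervalIntegrable (fun x => ∫ y in c..d, F x y) volume a b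
  integral_integral_eq_one : ∫ x in a..b, ∫ y in c..d, F x y = 1

-- Only terms with `k i ≠ 0` are constrained: in a transport plan these are the cells lying inside
-- the quadrant being integrated over.
theorem integral_integral_sum_mul_of_iteratedUnitMass {ι : Type*} (S : Finset ι) (k : ι → ℝ)
    (F : ι → ℝ → ℝ → ℝ) (hF : ∀ i ∈ S, k i ≠ 0 → IteratedUnitMass (F i) a b c d) :
    ∫ x in a..b, ∫ y in c..d, ∑ i ∈ S, k i * F i x y = ∑ i ∈ S, k i := by
  classical
  set S' := S.filter (fun i => k i ≠ 0)
  have hS' : ∀ i ∈ S', IteratedUnitMass (F i) a b c d := fun i hi =>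
    hF i (Finset.mem_filter.1 hi).1 (Finset.mem_filter.1 hi).2
  have hsum : ∀ x y, ∑ i ∈ S, k i * F i x y = ∑ i ∈ S', k i * F i x y := fun x y =>
    (Finset.sum_filter_of_ne fun i _ hi => left_ne_zero_of_mul hi).symm
  have hinner : ∀ x, ∫ y in c..d, ∑ i ∈ S', k i * F i x y
      = ∑ i ∈ S', k i * ∫ y in c..d, F i x y := fun x => by
    rw [intervalIntegral.integral_finsetSum fun i hi =>
      ((hS' i hi).intervalIntegrable_slice x).const_mul (k i)]
    simp only [intervalIntegral.integral_const_mul]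
  simp only [hsum, hinner]
  rw [intervalIntegral.integral_finsetSum fun i hi =>
    (hS' i hi).intervalIntegrable_integral.const_mul (k i)]
  calc ∑ i ∈ S', ∫ x in a..b, k i * ∫ y in c..d, F i x y
      = ∑ i ∈ S', k i := Finset.sum_congr rfl fun i hi => by
        rw [intervalIntegral.integral_const_mul, (hS' i hi).integral_integral_eq_one, mul_one]
    _ = ∑ i ∈ S, k i := Finset.sum_filter_ne_zero S

end IteratedIntegral

section RectDensity

variable {a b c d : ℝ} {w h : ℝ → ℝ → ℝ}

noncomputable def rectRestrict (a b c d : ℝ) (w : ℝ → ℝ → ℝ) (x y : ℝ) : ℝ :=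
  if x ∈ Icc a b ∧ y ∈ Icc c d then w x y else 0

theorem rectRestrict_swap (x y : ℝ) :
    rectRestrict a b c d w x y = rectRestrict c d a b (fun y x => w x y) y x := by
  simp only [rectRestrict, and_comm]

theorem mem_of_rectRestrict_ne_zero {x y : ℝ} (hxy : rectRestrict a b c d w x y ≠ 0) :
    x ∈ Icc a b ∧ y ∈ Icc c d := by
  by_contra hout
  exact hxy (if_neg hout)

theorem rectRestrict_of_mem {x : ℝ} (hx : x ∈ Icc a b) :
    rectRestrict a b c d w x = (Icc c d).indicator (w x) := by
  ext y
  simp [rectRestrict, hx, indicator_apply]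

theorem rectRestrict_of_notMem {x : ℝ} (hx : x ∉ Icc a b) : rectRestrict a b c d w x = 0 := by
  ext y
  simp [rectRestrict, hx]

theorem measurable_rectRestrict (hw : Continuous (uncurry w)) :
    Measurable (uncurry (rectRestrict a b c d w)) :=
  Measurable.ite (measurableSet_Icc.prod measurableSet_Icc) hw.measurable measurable_const

theorem integral_rectRestrict {p q : ℝ} (hp : p ≤ c) (hcd : c ≤ d) (hq : d ≤ q) (x : ℝ) :
    ∫ y in p..q, rectRestrict a b c d w x y
      = (Icc a b).indicator (fun x => ∫ y in c..d, w x y) x := by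
  by_cases hx : x ∈ Icc a b
  · rw [rectRestrict_of_mem hx, indicator_of_mem hx, integral_indicator_Icc_of_le hp hcd hq]
  · simp [rectRestrict_of_notMem hx, hx]

theorem iteratedUnitMass_rectRestrict (hw : Continuous (uncurry w))
    (hw1 : ∫ x in a..b, ∫ y in c..d, w x y = 1) {s t p q : ℝ} (hs : s ≤ a) (hab : a ≤ b)
    (ht : b ≤ t) (hp : p ≤ c) (hcd : c ≤ d) (hq : d ≤ q) :
    IteratedUnitMass (rectRestrict a b c d w) s t p q where
  intervalIntegrable_slice x := by
    by_cases hx : x ∈ Icc a b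
    · rw [rectRestrict_of_mem hx]
      exact intervalIntegrable_indicator_Icc (hw.uncurry_left x) p q
    · rw [rectRestrict_of_notMem hx]
      exact intervalIntegrable_const
  intervalIntegrable_integral := by
    simp only [integral_rectRestrict hp hcd hq]
    exact intervalIntegrable_indicator_Icc
      (intervalIntegral.continuous_parametric_intervalIntegral_of_continuous' hw c d) s t
  integral_integral_eq_one := by
    simp only [integral_rectRestrict hp hcd hq]
    rw [integral_indicator_Icc_of_le hs hab ht, hw1]

noncomputable def normalizedDensity (a b c d : ℝ) (h : ℝ → ℝ → ℝ) : ℝ → ℝ → ℝ :=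
  if ∫ x in a..b, ∫ y in c..d, h x y = 0 then fun _ _ => ((b - a) * (d - c))⁻¹
  else fun x y => h x y / ∫ x in a..b, ∫ y in c..d, h x y

theorem continuous_normalizedDensity (hc : Continuous (uncurry h)) :
    Continuous (uncurry (normalizedDensity a b c d h)) := by
  unfold normalizedDensity
  split_ifs
  · exact continuous_const
  · exact hc.div_const _

theorem normalizedDensity_nonneg (hh : ∀ x y, 0 ≤ h x y) (hab : a ≤ b) (hcd : c ≤ d)
    (x y : ℝ) : 0 ≤ normalizedDensity a b c d h x y := by
  unfold normalizedDensity
  split_ifs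
  · exact inv_nonneg.2 (mul_nonneg (sub_nonneg.2 hab) (sub_nonneg.2 hcd))
  · exact div_nonneg (hh x y) (intervalIntegral.integral_nonneg hab fun x _ =>
      intervalIntegral.integral_nonneg hcd fun y _ => hh x y)

theorem integral_integral_normalizedDensity (hab : a < b) (hcd : c < d) :
    ∫ x in a..b, ∫ y in c..d, normalizedDensity a b c d h x y = 1 := by
  unfold normalizedDensity
  split_ifs with h0
  · simp only [intervalIntegral.integral_const, smul_eq_mul]
    field_simp [(sub_pos.2 hab).ne', (sub_pos.2 hcd).ne']
  · simp only [intervalIntegral.integral_div]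
    exact div_self h0

theorem le_mul_normalizedDensity (hc : Continuous (uncurry h)) (hh : ∀ x y, 0 ≤ h x y)
    (hab : a < b) (hcd : c < d) {x y : ℝ} (hx : x ∈ Icc a b) (hy : y ∈ Icc c d) :
    h x y ≤ (∫ x in a..b, ∫ y in c..d, h x y) * normalizedDensity a b c d h x y := by
  unfold normalizedDensity
  split_ifs with h0
  · rw [h0, zero_mul, eq_zero_of_integral_integral_eq_zero hc hh hab hcd h0 hx hy]
  · rw [mul_div_cancel₀ _ h0]

end RectDensity

section Grid

variable {n : ℕ} {h : ℝ → ℝ → ℝ}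

noncomputable def cellLo (n : ℕ) (i : Fin n) : ℝ := (i : ℝ) * (1 / n)

noncomputable def cellHi (n : ℕ) (i : Fin n) : ℝ := ((i : ℝ) + 1) * (1 / n)

theorem gridWeight_eq (i j : Fin n) :
    gridWeight n h i j = ∫ x in cellLo n i..cellHi n i, ∫ y in cellLo n j..cellHi n j, h x y :=
  rfl

theorem cellLo_nonneg (i : Fin n) : 0 ≤ cellLo n i := by
  unfold cellLo
  positivity

theorem cellLo_lt_cellHi (hn : 0 < n) (i : Fin n) : cellLo n i < cellHi n i :=
  mul_lt_mul_of_pos_right (lt_add_one _) (by positivity)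

theorem cellHi_le_cellLo {i i' : Fin n} (hii' : i < i') : cellHi n i ≤ cellLo n i' :=
  mul_le_mul_of_nonneg_right (by exact_mod_cast hii') (by positivity)

theorem cellHi_le_one (i : Fin n) : cellHi n i ≤ 1 := by
  have hn : (0 : ℝ) < n := by exact_mod_cast i.pos
  rw [cellHi, mul_one_div, div_le_one hn]
  exact_mod_cast i.isLt

theorem exists_mem_cell (hn : 0 < n) {x : ℝ} (hx : x ∈ Icc (0 : ℝ) 1) :
    ∃ i : Fin n, x ∈ Icc (cellLo n i) (cellHi n i) := by
  have hn' : (0 : ℝ) < n := by exact_mod_cast hn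
  refine ⟨⟨min ⌊x * n⌋₊ (n - 1), by omega⟩, ?_, ?_⟩
  · rw [cellLo, mul_one_div, div_le_iff₀ hn']
    calc ((min ⌊x * n⌋₊ (n - 1) : ℕ) : ℝ) ≤ ⌊x * n⌋₊ := by exact_mod_cast min_le_left _ _
      _ ≤ x * n := Nat.floor_le (mul_nonneg hx.1 hn'.le)
  · rw [cellHi, mul_one_div, le_div_iff₀ hn']
    change x * n ≤ ((min ⌊x * n⌋₊ (n - 1) : ℕ) : ℝ) + 1
    rcases min_cases ⌊x * n⌋₊ (n - 1) with ⟨hmin, _⟩ | ⟨hmin, _⟩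
    · rw [hmin]
      exact (Nat.lt_floor_add_one _).le
    · rw [hmin, Nat.cast_sub hn, Nat.cast_one, sub_add_cancel]
      nlinarith [hx.2]

-- Closed cells overlap on their null boundaries; this is harmless since feasibility only needs
-- lower bounds on `f` and `g`, and it spares an almost-everywhere argument.
noncomputable def cellDensity (n : ℕ) (h : ℝ → ℝ → ℝ) (u : Fin n × Fin n) : ℝ → ℝ → ℝ :=
  rectRestrict (cellLo n u.1) (cellHi n u.1) (cellLo n u.2) (cellHi n u.2)
    (normalizedDensity (cellLo n u.1) (cellHi n u.1) (cellLo n u.2) (cellHi n u.2) h)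

theorem cellDensity_nonneg (hn : 0 < n) (hh : ∀ x y, 0 ≤ h x y) (u : Fin n × Fin n)
    (x y : ℝ) : 0 ≤ cellDensity n h u x y := by
  unfold cellDensity rectRestrict
  split_ifs
  · exact normalizedDensity_nonneg hh (cellLo_lt_cellHi hn _).le (cellLo_lt_cellHi hn _).le x y
  · exact le_rfl

theorem measurable_cellDensity (hc : Continuous (uncurry h)) (u : Fin n × Fin n) :
    Measurable (uncurry (cellDensity n h u)) :=
  measurable_rectRestrict (continuous_normalizedDensity hc)

theorem mem_of_cellDensity_ne_zero {u : Fin n × Fin n} {x y : ℝ}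
    (hxy : cellDensity n h u x y ≠ 0) :
    x ∈ Icc (cellLo n u.1) (cellHi n u.1) ∧ y ∈ Icc (cellLo n u.2) (cellHi n u.2) :=
  mem_of_rectRestrict_ne_zero hxy

theorem iteratedUnitMass_cellDensity (hn : 0 < n) (hc : Continuous (uncurry h))
    {u : Fin n × Fin n} {s t p q : ℝ} (hs : s ≤ cellLo n u.1) (ht : cellHi n u.1 ≤ t)
    (hp : p ≤ cellLo n u.2) (hq : cellHi n u.2 ≤ q) :
    IteratedUnitMass (cellDensity n h u) s t p q :=
  iteratedUnitMass_rectRestrict (continuous_normalizedDensity hc)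
    (integral_integral_normalizedDensity (cellLo_lt_cellHi hn _) (cellLo_lt_cellHi hn _))
    hs (cellLo_lt_cellHi hn _).le ht hp (cellLo_lt_cellHi hn _).le hq

theorem iteratedUnitMass_cellDensity_swap (hn : 0 < n) (hc : Continuous (uncurry h))
    {u : Fin n × Fin n} {s t p q : ℝ} (hs : s ≤ cellLo n u.1) (ht : cellHi n u.1 ≤ t)
    (hp : p ≤ cellLo n u.2) (hq : cellHi n u.2 ≤ q) :
    IteratedUnitMass (fun y x => cellDensity n h u x y) p q s t := by
  have hnd := continuous_normalizedDensity
    (a := cellLo n u.1) (b := cellHi n u.1) (c := cellLo n u.2) (d := cellHi n u.2) hc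
  simp only [cellDensity, rectRestrict_swap (a := cellLo n u.1)]
  refine iteratedUnitMass_rectRestrict (w := fun y x => normalizedDensity (cellLo n u.1)
    (cellHi n u.1) (cellLo n u.2) (cellHi n u.2) h x y) (hnd.comp continuous_swap) ?_
    hp (cellLo_lt_cellHi hn _).le hq hs (cellLo_lt_cellHi hn _).le ht
  rw [← integral_integral_swap_of_continuous hnd (cellLo_lt_cellHi hn _).le
    (cellLo_lt_cellHi hn _).le]
  exact integral_integral_normalizedDensity (cellLo_lt_cellHi hn _) (cellLo_lt_cellHi hn _)

theorem le_sum_mul_cellDensity (hn : 0 < n) (hc : Continuous (uncurry h))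
    (hh : ∀ x y, 0 ≤ h x y) {s : Fin n × Fin n → ℝ}
    (hs : ∀ u : Fin n × Fin n, gridWeight n h u.1 u.2 ≤ s u) {x y : ℝ}
    (hx : x ∈ Icc (0 : ℝ) 1) (hy : y ∈ Icc (0 : ℝ) 1) :
    h x y ≤ ∑ u, s u * cellDensity n h u x y := by
  obtain ⟨i, hi⟩ := exists_mem_cell hn hx
  obtain ⟨j, hj⟩ := exists_mem_cell hn hy
  have hs0 : ∀ u, 0 ≤ s u := fun u => (intervalIntegral.integral_nonneg
    (cellLo_lt_cellHi hn _).le fun x _ => intervalIntegral.integral_nonneg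
      (cellLo_lt_cellHi hn _).le fun y _ => hh x y).trans (hs u)
  calc h x y ≤ gridWeight n h i j * cellDensity n h (i, j) x y := by
        rw [cellDensity, rectRestrict, if_pos ⟨hi, hj⟩, gridWeight_eq]
        exact le_mul_normalizedDensity hc hh (cellLo_lt_cellHi hn _) (cellLo_lt_cellHi hn _) hi hj
    _ ≤ s (i, j) * cellDensity n h (i, j) x y :=
        mul_le_mul_of_nonneg_right (hs (i, j)) (cellDensity_nonneg hn hh _ x y)
    _ ≤ ∑ u, s u * cellDensity n h u x y :=
        Finset.single_le_sum (fun u _ => mul_nonneg (hs0 u) (cellDensity_nonneg hn hh u x y))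
          (Finset.mem_univ _)

end Grid

section Plan

variable {n : ℕ} {f g : ℝ → ℝ → ℝ} {y : Fin n × Fin n → Fin n × Fin n → ℝ}

def gridEdges (n : ℕ) : Finset ((Fin n × Fin n) × (Fin n × Fin n)) :=
  Finset.univ.filter fun e => e.1.1 < e.2.1 ∧ e.2.2 < e.1.2

theorem sum_gridEdges_eq_sum_sum (F : Fin n × Fin n → Fin n × Fin n → ℝ) :
    ∑ e ∈ gridEdges n, F e.1 e.2
      = ∑ u, ∑ v ∈ Finset.univ.filter (fun v : Fin n × Fin n => u.1 < v.1 ∧ v.2 < u.2), F u v :=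
  Finset.sum_finset_product' _ _ _ fun e => by simp [gridEdges]

theorem sum_gridEdges_eq_sum_sum_right (F : Fin n × Fin n → Fin n × Fin n → ℝ) :
    ∑ e ∈ gridEdges n, F e.1 e.2
      = ∑ v, ∑ u ∈ Finset.univ.filter (fun u : Fin n × Fin n => u.1 < v.1 ∧ v.2 < u.2), F u v :=
  Finset.sum_finset_product_right' _ _ _ fun e => by simp [gridEdges]

noncomputable def transshipmentPlan (n : ℕ) (f g : ℝ → ℝ → ℝ)
    (y : Fin n × Fin n → Fin n × Fin n → ℝ) (x₁ y₁ x₂ y₂ : ℝ) : ℝ :=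
  ∑ e ∈ gridEdges n, y e.1 e.2 * cellDensity n f e.1 x₁ y₁ * cellDensity n g e.2 x₂ y₂

theorem measurable_transshipmentPlan (hf : Continuous (uncurry f))
    (hg : Continuous (uncurry g)) :
    Measurable fun q : ℝ × ℝ × ℝ × ℝ => transshipmentPlan n f g y q.1 q.2.1 q.2.2.1 q.2.2.2 :=
  Finset.measurable_sum _ fun e _ =>
    (((measurable_cellDensity hf e.1).comp
      (by fun_prop : Measurable fun q : ℝ × ℝ × ℝ × ℝ => (q.1, q.2.1))).const_mul _).mul
      ((measurable_cellDensity hg e.2).comp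
        (by fun_prop : Measurable fun q : ℝ × ℝ × ℝ × ℝ => (q.2.2.1, q.2.2.2)))

theorem transshipmentPlan_nonneg (hn : 0 < n) (hf : ∀ x y, 0 ≤ f x y) (hg : ∀ x y, 0 ≤ g x y)
    (hy : ∀ u v : Fin n × Fin n, u.1 < v.1 → v.2 < u.2 → 0 ≤ y u v) (x₁ y₁ x₂ y₂ : ℝ) :
    0 ≤ transshipmentPlan n f g y x₁ y₁ x₂ y₂ :=
  Finset.sum_nonneg fun _ he =>
    have hedge := (Finset.mem_filter.1 he).2
    mul_nonneg (mul_nonneg (hy _ _ hedge.1 hedge.2) (cellDensity_nonneg hn hf _ _ _))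
      (cellDensity_nonneg hn hg _ _ _)

theorem integral_integral_transshipmentPlan_right (hn : 0 < n) (hg : Continuous (uncurry g))
    (x₁ y₁ : ℝ) :
    ∫ y₂ in (0 : ℝ)..y₁, ∫ x₂ in x₁..1, transshipmentPlan n f g y x₁ y₁ x₂ y₂
      = ∑ e ∈ gridEdges n, y e.1 e.2 * cellDensity n f e.1 x₁ y₁ := by
  unfold transshipmentPlan
  refine integral_integral_sum_mul_of_iteratedUnitMass (gridEdges n)
    (fun e => y e.1 e.2 * cellDensity n f e.1 x₁ y₁)
    (fun e y₂ x₂ => cellDensity n g e.2 x₂ y₂) fun e he hne => ?_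
  have hedge := (Finset.mem_filter.1 he).2
  obtain ⟨hx₁, hy₁⟩ := mem_of_cellDensity_ne_zero (right_ne_zero_of_mul hne)
  exact iteratedUnitMass_cellDensity_swap hn hg (hx₁.2.trans (cellHi_le_cellLo hedge.1))
    (cellHi_le_one _) (cellLo_nonneg _) ((cellHi_le_cellLo hedge.2).trans hy₁.1)

theorem integral_integral_transshipmentPlan_left (hn : 0 < n) (hf : Continuous (uncurry f))
    (x₂ y₂ : ℝ) :
    ∫ y₁ in y₂..1, ∫ x₁ in (0 : ℝ)..x₂, transshipmentPlan n f g y x₁ y₁ x₂ y₂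
      = ∑ e ∈ gridEdges n, y e.1 e.2 * cellDensity n g e.2 x₂ y₂ := by
  have hcomm : ∀ x₁ y₁, transshipmentPlan n f g y x₁ y₁ x₂ y₂
      = ∑ e ∈ gridEdges n, y e.1 e.2 * cellDensity n g e.2 x₂ y₂ * cellDensity n f e.1 x₁ y₁ :=
    fun x₁ y₁ => Finset.sum_congr rfl fun e _ => mul_right_comm _ _ _
  simp only [hcomm]
  refine integral_integral_sum_mul_of_iteratedUnitMass (gridEdges n)
    (fun e => y e.1 e.2 * cellDensity n g e.2 x₂ y₂)
    (fun e y₁ x₁ => cellDensity n f e.1 x₁ y₁) fun e he hne => ?_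
  have hedge := (Finset.mem_filter.1 he).2
  obtain ⟨hx₂, hy₂⟩ := mem_of_cellDensity_ne_zero (right_ne_zero_of_mul hne)
  exact iteratedUnitMass_cellDensity_swap hn hf (cellLo_nonneg _)
    ((cellHi_le_cellLo hedge.1).trans hx₂.1) (hy₂.2.trans (cellHi_le_cellLo hedge.2))
    (cellHi_le_one _)

theorem bCost_transshipmentPlan (hn : 0 < n) (hf : Continuous (uncurry f))
    (hg : Continuous (uncurry g)) :
    BCost (transshipmentPlan n f g y) = ∑ e ∈ gridEdges n, y e.1 e.2 := by
  simp only [BCost, integral_integral_transshipmentPlan_right hn hg]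
  exact integral_integral_sum_mul_of_iteratedUnitMass (gridEdges n) (fun e => y e.1 e.2)
    (fun e => cellDensity n f e.1) fun _ _ _ =>
      iteratedUnitMass_cellDensity hn hf (cellLo_nonneg _) (cellHi_le_one _)
        (cellLo_nonneg _) (cellHi_le_one _)

end Plan

/-- transshipment upper bound `OPT(D) ≥ OPT(B)`: any feasible
solution of the discrete transshipment Problem D on the grid graph `G_n`
(edges `u(i,j)–v(i',j')` for `i < i'`, `j' < j`) yields a feasible plan for
Problem B with no larger cost. -/
theorem transshipment_upper_bound
    (f g : ℝ → ℝ → ℝ) (n : ℕ) (hn : 2 ≤ n)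
    (hfcont : Continuous (fun p : ℝ × ℝ => f p.1 p.2))
    (hgcont : Continuous (fun p : ℝ × ℝ => g p.1 p.2))
    (hfpos : ∀ x y, 0 ≤ f x y) (hgpos : ∀ x y, 0 ≤ g x y)
    (y : (Fin n × Fin n) → (Fin n × Fin n) → ℝ)
    -- y ≥ 0 on the edges of G_n
    (hynn : ∀ u v : Fin n × Fin n, u.1 < v.1 → v.2 < u.2 → 0 ≤ y u v)
    -- Σ_{v : (u,v) ∈ E} y_{uv} ≥ f_d(u) for every u ∈ U
    (hu : ∀ u : Fin n × Fin n,
      gridWeight n f u.1 u.2 ≤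
        ∑ v ∈ Finset.univ.filter (fun v : Fin n × Fin n => u.1 < v.1 ∧ v.2 < u.2),
          y u v)
    -- Σ_{u : (u,v) ∈ E} y_{uv} ≥ g_d(v) for every v ∈ V
    (hv : ∀ v : Fin n × Fin n,
      gridWeight n g v.1 v.2 ≤
        ∑ u ∈ Finset.univ.filter (fun u : Fin n × Fin n => u.1 < v.1 ∧ v.2 < u.2),
          y u v) :
    ∃ γ : ℝ → ℝ → ℝ → ℝ → ℝ, ProblemBFeasible f g γ ∧
      BCost γ ≤
        ∑ u : Fin n × Fin n,
          ∑ v ∈ Finset.univ.filter (fun v : Fin n × Fin n => u.1 < v.1 ∧ v.2 < u.2),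
            y u v := by
  have hn0 : 0 < n := by omega
  refine ⟨transshipmentPlan n f g y, ⟨measurable_transshipmentPlan hfcont hgcont,
    ae_of_all _ fun q => transshipmentPlan_nonneg hn0 hfpos hgpos hynn _ _ _ _, ?_, ?_⟩, ?_⟩
  · refine ae_restrict_of_forall_mem (measurableSet_Icc.prod measurableSet_Icc) ?_
    rintro ⟨x₁, y₁⟩ ⟨hx₁, hy₁⟩
    rw [integral_integral_transshipmentPlan_right hn0 hgcont,
      sum_gridEdges_eq_sum_sum fun u v => y u v * cellDensity n f u x₁ y₁]
    simp only [← Finset.sum_mul]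
    exact le_sum_mul_cellDensity hn0 hfcont hfpos hu hx₁ hy₁
  · refine ae_restrict_of_forall_mem (measurableSet_Icc.prod measurableSet_Icc) ?_
    rintro ⟨x₂, y₂⟩ ⟨hx₂, hy₂⟩
    rw [integral_integral_transshipmentPlan_left hn0 hfcont,
      sum_gridEdges_eq_sum_sum_right fun u v => y u v * cellDensity n g v x₂ y₂]
    simp only [← Finset.sum_mul]
    exact le_sum_mul_cellDensity hn0 hgcont hgpos hv hx₂ hy₂
  · rw [bCost_transshipmentPlan hn0 hfcont hgcont, sum_gridEdges_eq_sum_sum fun u v => y u v]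
end

section
/- Near-optimality of grid auctions: let φ : [0,1]² → ℝ be Lipschitz continuous and strictly positive, and let f, g be marginal profit contribution functions for φ with values in [0,1]. There exists a constant c (depending only on φ) such that for every n ∈ ℕ, n ≥ 2, there is a valid allocation pair (α,β) in which α and β are constant on each interval [k/n, (k+1)/n), k = 0,…,n−1, whose profit satisfies Profit(α,β,φ) ≥ sup{ Profit(α',β',φ) : (α',β') a valid allocation pair } − c/n. -/
open MeasureTheory

/-- `f, g` are marginal profit contribution functions for `φ`. -/
def IsMPC (φ f g : ℝ → ℝ → ℝ) : Prop :=
  Measurable (fun p : ℝ × ℝ => f p.1 p.2) ∧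
  Measurable (fun p : ℝ × ℝ => g p.1 p.2) ∧
  (∀ x y, 0 ≤ f x y) ∧ (∀ x y, 0 ≤ g x y) ∧
  (∀ x ∈ Set.Icc (0:ℝ) 1, ∀ y ∈ Set.Icc (0:ℝ) 1,
    (∫ t in x..1, f t y) = sSup ((fun x' => RevF φ x' y) '' Set.Icc x 1)) ∧
  (∀ x ∈ Set.Icc (0:ℝ) 1, ∀ y ∈ Set.Icc (0:ℝ) 1,
    (∫ t in y..1, g x t) = sSup ((fun y' => RevG φ x y') '' Set.Icc y 1))

open Set Function

/-!
Given a valid pair `(α, β)`, the least allocation compatible with `β` is a monotone `u ≤ α`, and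
its generalized inverse is a monotone `u' ≤ β`. On the cell `[k/n, (k+1)/n)` the grid price is a
maximiser of the revenue at height `k/n` over `[u((k+1)/n), 1]`. As the revenue is jointly
`L`-Lipschitz, every price `≥ u` on that cell earns at most this plus
`L (u((k+1)/n) - u(k/n) + 2/n)`, and these errors telescope to `3L/n`; likewise for `β` with `u'`.
Reading `u` and `u'` at the right end of each cell keeps the grid pair non-crossing, since
`lowerInv u x < c` forces `x ≤ u c`.
-/

abbrev unitSquare : Set (ℝ × ℝ) := Icc 0 1 ×ˢ Icc 0 1

section Lipschitz

variable {α β γ : Type*} [PseudoEMetricSpace α] [PseudoEMetricSpace β] [PseudoEMetricSpace γ]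
  {ψ : α → β → γ} {K : NNReal} {s : Set α} {t : Set β}

theorem LipschitzOnWith.uncurry_flip (hψ : LipschitzOnWith K (uncurry ψ) (s ×ˢ t)) :
    LipschitzOnWith K (uncurry (flip ψ)) (t ×ˢ s) := by
  have hswap : LipschitzWith 1 fun p : β × α => (p.2, p.1) := by
    simpa using LipschitzWith.prod_snd.prodMk LipschitzWith.prod_fst
  have h := hψ.comp hswap.lipschitzOnWith (mapsTo_swap_prod t s)
  rwa [mul_one] at h

theorem LipschitzOnWith.comp_prodMk_right (hψ : LipschitzOnWith K (uncurry ψ) (s ×ˢ t))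
    {y : β} (hy : y ∈ t) : LipschitzOnWith K (ψ · y) s := by
  simpa [comp_def] using hψ.comp (LipschitzWith.prodMk_right y).lipschitzOnWith fun x hx => ⟨hx, hy⟩

theorem LipschitzOnWith.comp_prodMk_left (hψ : LipschitzOnWith K (uncurry ψ) (s ×ˢ t))
    {x : α} (hx : x ∈ s) : LipschitzOnWith K (ψ x) t := by
  simpa [comp_def] using hψ.comp (LipschitzWith.prodMk_left x).lipschitzOnWith fun y hy => ⟨hx, hy⟩

end Lipschitz

section UnitSquare

variable {ψ : ℝ → ℝ → ℝ} {K : NNReal}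

theorem abs_le_of_lipschitzOnWith_unitSquare (hψ : LipschitzOnWith K (uncurry ψ) unitSquare)
    {x y : ℝ} (hx : x ∈ Icc (0:ℝ) 1) (hy : y ∈ Icc (0:ℝ) 1) : |ψ x y| ≤ ‖ψ 0 0‖₊ + K := by
  have hdist := hψ.dist_le_mul (x, y) ⟨hx, hy⟩ (0, 0) (by simp)
  have h1 : dist (x, y) ((0, 0) : ℝ × ℝ) ≤ 1 := by
    rw [Prod.dist_eq, Real.dist_eq, Real.dist_eq, sub_zero, sub_zero,
      abs_of_nonneg hx.1, abs_of_nonneg hy.1]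
    exact max_le hx.2 hy.2
  have h2 : |ψ x y| ≤ |ψ 0 0| + dist (ψ x y) (ψ 0 0) := by
    rw [Real.dist_eq]; linarith [abs_sub_abs_le_abs_sub (ψ x y) (ψ 0 0)]
  simp only [uncurry_apply_pair] at hdist
  simp only [coe_nnnorm, Real.norm_eq_abs]
  nlinarith [K.coe_nonneg]

theorem intervalIntegrable_of_lipschitzOnWith_unitSquare
    (hψ : LipschitzOnWith K (uncurry ψ) unitSquare) {y a b : ℝ} (hy : y ∈ Icc (0:ℝ) 1)
    (ha : a ∈ Icc (0:ℝ) 1) (hb : b ∈ Icc (0:ℝ) 1) :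
    IntervalIntegrable (ψ · y) volume a b :=
  ((hψ.comp_prodMk_right hy).continuousOn.mono (uIcc_subset_Icc ha hb)).intervalIntegrable

theorem abs_integral_le_of_lipschitzOnWith_unitSquare
    (hψ : LipschitzOnWith K (uncurry ψ) unitSquare) {y a b : ℝ} (hy : y ∈ Icc (0:ℝ) 1)
    (ha : a ∈ Icc (0:ℝ) 1) (hb : b ∈ Icc (0:ℝ) 1) :
    |∫ t in a..b, ψ t y| ≤ (‖ψ 0 0‖₊ + K) * |b - a| := by
  simp only [← Real.norm_eq_abs]
  refine intervalIntegral.norm_integral_le_of_norm_le_const fun t ht => ?_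
  simpa using
    abs_le_of_lipschitzOnWith_unitSquare hψ (uIcc_subset_Icc ha hb (uIoc_subset_uIcc ht)) hy

end UnitSquare

namespace RevF

variable {ψ : ℝ → ℝ → ℝ} {K : NNReal}

theorem abs_sub_le_left (hψ : LipschitzOnWith K (uncurry ψ) unitSquare) {x x' y : ℝ}
    (hx : x ∈ Icc (0:ℝ) 1) (hx' : x' ∈ Icc (0:ℝ) 1) (hy : y ∈ Icc (0:ℝ) 1) :
    |RevF ψ x y - RevF ψ x' y| ≤ 2 * (‖ψ 0 0‖₊ + K) * |x - x'| := by
  have h1 : (1:ℝ) ∈ Icc (0:ℝ) 1 := by simp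
  have hsplit : RevF ψ x y - RevF ψ x' y
      = (x - x') * (∫ t in x..1, ψ t y) + x' * ∫ t in x..x', ψ t y := by
    rw [RevF, RevF, ← intervalIntegral.integral_add_adjacent_intervals
      (intervalIntegrable_of_lipschitzOnWith_unitSquare hψ hy hx hx')
      (intervalIntegrable_of_lipschitzOnWith_unitSquare hψ hy hx' h1)]
    ring
  have hI := abs_integral_le_of_lipschitzOnWith_unitSquare hψ hy hx h1
  have hI' := abs_integral_le_of_lipschitzOnWith_unitSquare hψ hy hx hx'
  have hx1 : |1 - x| ≤ 1 := abs_le.2 ⟨by linarith [hx.2], by linarith [hx.1]⟩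
  have hx'1 : |x'| ≤ 1 := abs_le.2 ⟨by linarith [hx'.1], hx'.2⟩
  have hM : (0:ℝ) ≤ ‖ψ 0 0‖₊ + K := by positivity
  rw [abs_sub_comm x' x] at hI'
  rw [hsplit]
  calc |(x - x') * (∫ t in x..1, ψ t y) + x' * ∫ t in x..x', ψ t y|
        ≤ |x - x'| * |∫ t in x..1, ψ t y| + |x'| * |∫ t in x..x', ψ t y| := by
        rw [← abs_mul, ← abs_mul]; exact abs_add_le _ _
    _ ≤ |x - x'| * (‖ψ 0 0‖₊ + K : ℝ) + (1:ℝ) * ((‖ψ 0 0‖₊ + K : ℝ) * |x - x'|) := by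
        gcongr
        · exact hI.trans (by nlinarith)
    _ = _ := by ring

theorem abs_sub_le_right (hψ : LipschitzOnWith K (uncurry ψ) unitSquare) {x y y' : ℝ}
    (hx : x ∈ Icc (0:ℝ) 1) (hy : y ∈ Icc (0:ℝ) 1) (hy' : y' ∈ Icc (0:ℝ) 1) :
    |RevF ψ x y - RevF ψ x y'| ≤ K * |y - y'| := by
  have h1 : (1:ℝ) ∈ Icc (0:ℝ) 1 := by simp
  have hsplit : RevF ψ x y - RevF ψ x y' = x * ∫ t in x..1, (ψ t y - ψ t y') := by
    rw [RevF, RevF, intervalIntegral.integral_sub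
      (intervalIntegrable_of_lipschitzOnWith_unitSquare hψ hy hx h1)
      (intervalIntegrable_of_lipschitzOnWith_unitSquare hψ hy' hx h1)]
    ring
  have hI : |∫ t in x..1, (ψ t y - ψ t y')| ≤ K * |y - y'| * |1 - x| := by
    simp only [← Real.norm_eq_abs]
    refine intervalIntegral.norm_integral_le_of_norm_le_const fun t ht => ?_
    have ht' : t ∈ Icc (0:ℝ) 1 := uIcc_subset_Icc hx h1 (uIoc_subset_uIcc ht)
    simpa only [← dist_eq_norm] using (hψ.comp_prodMk_left ht').dist_le_mul y hy y' hy'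
  have hx1 : |1 - x| ≤ 1 := abs_le.2 ⟨by linarith [hx.2], by linarith [hx.1]⟩
  rw [hsplit, abs_mul, abs_of_nonneg hx.1]
  calc x * |∫ t in x..1, (ψ t y - ψ t y')| ≤ 1 * (K * |y - y'| * 1) := by
        gcongr
        exacts [hx.2, hI.trans (by gcongr)]
    _ = _ := by ring

theorem lipschitzOnWith (hψ : LipschitzOnWith K (uncurry ψ) unitSquare) :
    LipschitzOnWith (2 * (‖ψ 0 0‖₊ + K) + K) (uncurry (RevF ψ)) unitSquare := by
  refine LipschitzOnWith.of_dist_le_mul fun p hp q hq => ?_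
  have hleft := abs_sub_le_left hψ hp.1 hq.1 hp.2
  have hright := abs_sub_le_right hψ hq.1 hp.2 hq.2
  have hmax1 : |p.1 - q.1| ≤ dist p q := by
    rw [Prod.dist_eq, ← Real.dist_eq]; exact le_max_left _ _
  have hmax2 : |p.2 - q.2| ≤ dist p q := by
    rw [Prod.dist_eq, ← Real.dist_eq]; exact le_max_right _ _
  rw [Real.dist_eq]
  push_cast
  calc |RevF ψ p.1 p.2 - RevF ψ q.1 q.2|
      ≤ |RevF ψ p.1 p.2 - RevF ψ q.1 p.2| + |RevF ψ q.1 p.2 - RevF ψ q.1 q.2| :=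
        abs_sub_le _ _ _
    _ ≤ 2 * (‖ψ 0 0‖ + K) * dist p q + K * dist p q := by
        simp only [coe_nnnorm] at hleft
        exact add_le_add (hleft.trans (by gcongr)) (hright.trans (by gcongr))
    _ = _ := by ring

end RevF

theorem intervalIntegrable_comp_of_continuousOn {R : ℝ → ℝ → ℝ}
    (hR : ContinuousOn (uncurry R) unitSquare) {v : ℝ → ℝ} (hv : Measurable v)
    (hv01 : ∀ y ∈ Icc (0:ℝ) 1, v y ∈ Icc (0:ℝ) 1) :
    IntervalIntegrable (fun y => R (v y) y) volume 0 1 := by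
  set clamp : ℝ → ℝ := fun x => projIcc 0 1 zero_le_one x
  have hclamp (x : ℝ) : clamp x ∈ Icc (0:ℝ) 1 := (projIcc 0 1 zero_le_one x).2
  have hG : Continuous (uncurry R ∘ fun p : ℝ × ℝ => (clamp p.1, clamp p.2)) :=
    hR.comp_continuous (by fun_prop) fun p => ⟨hclamp p.1, hclamp p.2⟩
  obtain ⟨C, hC⟩ := (isCompact_Icc.prod isCompact_Icc).exists_bound_of_continuousOn hR
  have hGv : IntegrableOn (fun y => R (clamp (v y)) (clamp y)) (Ioc 0 1) :=
    Measure.integrableOn_of_bounded (by simp)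
      (hG.measurable.comp (hv.prodMk measurable_id)).aestronglyMeasurable
      (ae_of_all _ fun y => hC (clamp (v y), clamp y) ⟨hclamp (v y), hclamp y⟩)
  rw [intervalIntegrable_iff_integrableOn_Ioc_of_le zero_le_one]
  refine hGv.congr_fun (fun y hy => ?_) measurableSet_Ioc
  have hy : y ∈ Icc (0:ℝ) 1 := Ioc_subset_Icc_self hy
  simp only [clamp, projIcc_of_mem _ hy, projIcc_of_mem _ (hv01 y hy)]

section Grid

noncomputable def gridStep (A : ℕ → ℝ) (n : ℕ) (y : ℝ) : ℝ :=
  if y < 1 then A ⌊y * n⌋₊ else 1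

variable {A : ℕ → ℝ} {n k : ℕ}

theorem measurable_gridStep (A : ℕ → ℝ) (n : ℕ) : Measurable (gridStep A n) :=
  Measurable.ite measurableSet_Iio
    (measurable_from_nat.comp (Nat.measurable_floor.comp (measurable_id.mul_const _)))
    measurable_const

theorem gridStep_eq_of_mem_Ico (hk : k < n) {y : ℝ}
    (hy : y ∈ Ico ((k : ℝ) / n) (((k : ℝ) + 1) / n)) : gridStep A n y = A k := by
  have hn : (0 : ℝ) < n := by exact_mod_cast (k.zero_le.trans_lt hk)
  have hy1 : y < 1 := hy.2.trans_le ((div_le_one hn).2 (by exact_mod_cast hk))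
  rw [gridStep, if_pos hy1]
  congr
  rw [Nat.floor_eq_iff (by nlinarith [hy.1, (by positivity : (0:ℝ) ≤ k / n)])]
  constructor
  · rw [← div_le_iff₀ hn]; exact hy.1
  · rw [← lt_div_iff₀ hn]; exact hy.2

theorem gridStep_one : gridStep A n 1 = 1 := if_neg (lt_irrefl 1)

theorem floor_mul_lt {y : ℝ} (hy : y ∈ Ico (0:ℝ) 1) (hn : 0 < n) : ⌊y * n⌋₊ < n := by
  rw [Nat.floor_lt (by have := hy.1; positivity)]
  exact mul_lt_of_lt_one_left (by exact_mod_cast hn) hy.2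

theorem lt_floor_mul_add_one_div (y : ℝ) (hn : 0 < n) : y < (⌊y * n⌋₊ + 1) / n := by
  rw [lt_div_iff₀ (by exact_mod_cast hn)]
  exact Nat.lt_floor_add_one _

theorem gridStep_mem_Icc (hn : 0 < n) (hA : ∀ k < n, A k ∈ Icc (0:ℝ) 1) {y : ℝ}
    (hy : y ∈ Icc (0:ℝ) 1) : gridStep A n y ∈ Icc (0:ℝ) 1 := by
  unfold gridStep
  split_ifs with hy1
  · exact hA _ (floor_mul_lt ⟨hy.1, hy1⟩ hn)
  · simp

end Grid

theorem intervalIntegral_eq_sum_cells {F : ℝ → ℝ} (hF : IntervalIntegrable F volume 0 1)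
    {n : ℕ} (hn : 0 < n) :
    ∫ y in (0:ℝ)..1, F y = ∑ k ∈ Finset.range n, ∫ y in (k : ℝ) / n..((k : ℝ) + 1) / n, F y := by
  have hn' : (n : ℝ) ≠ 0 := by exact_mod_cast hn.ne'
  have hcell (k : ℕ) : (((k + 1 : ℕ) : ℝ)) / n = ((k : ℝ) + 1) / n := by push_cast; ring
  have hmem {k : ℕ} (hk : k ≤ n) : (k : ℝ) / n ∈ uIcc (0:ℝ) 1 := by
    rw [uIcc_of_le zero_le_one]
    exact ⟨by positivity, (div_le_one₀ (by positivity)).2 (by exact_mod_cast hk)⟩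
  have := intervalIntegral.sum_integral_adjacent_intervals (a := fun k : ℕ => (k : ℝ) / n)
    fun k hk => hF.mono_set (uIcc_subset_uIcc (hmem hk.le) (hmem hk))
  simpa [hcell, hn'] using this.symm

section Threshold

noncomputable def minValidAlpha (β : ℝ → ℝ) (y : ℝ) : ℝ :=
  sSup (insert 0 {x | x ∈ Icc (0:ℝ) 1 ∧ β x ≤ y})

noncomputable def lowerInv (u : ℝ → ℝ) (x : ℝ) : ℝ :=
  sInf (insert 1 {y | y ∈ Icc (0:ℝ) 1 ∧ x ≤ u y})

variable {β u : ℝ → ℝ}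

theorem bddAbove_minValidAlpha_set (β : ℝ → ℝ) (y : ℝ) :
    BddAbove (insert 0 {x | x ∈ Icc (0:ℝ) 1 ∧ β x ≤ y}) :=
  ⟨1, by rintro r (rfl | ⟨hr, -⟩) <;> simp_all⟩

theorem minValidAlpha_mem_Icc (β : ℝ → ℝ) (y : ℝ) : minValidAlpha β y ∈ Icc (0:ℝ) 1 :=
  ⟨le_csSup (bddAbove_minValidAlpha_set β y) (mem_insert _ _),
    csSup_le (insert_nonempty _ _) (by rintro r (rfl | ⟨hr, -⟩) <;> simp_all)⟩

theorem monotone_minValidAlpha (β : ℝ → ℝ) : Monotone (minValidAlpha β) := fun _ _ hyy =>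
  csSup_le_csSup (bddAbove_minValidAlpha_set β _) (insert_nonempty _ _)
    (insert_subset_insert fun _ hx => ⟨hx.1, hx.2.trans hyy⟩)

theorem le_minValidAlpha_apply {x : ℝ} (hx : x ∈ Icc (0:ℝ) 1) : x ≤ minValidAlpha β (β x) :=
  le_csSup (bddAbove_minValidAlpha_set β _) (mem_insert_of_mem _ ⟨hx, le_rfl⟩)

theorem minValidAlpha_le {α : ℝ → ℝ}
    (hval : ∀ x ∈ Icc (0:ℝ) 1, ∀ y ∈ Icc (0:ℝ) 1, β x ≤ y → x ≤ α y)
    {y : ℝ} (hy : y ∈ Icc (0:ℝ) 1) (hα : 0 ≤ α y) : minValidAlpha β y ≤ α y :=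
  csSup_le (insert_nonempty _ _) <| by
    rintro r (rfl | ⟨hr, hβr⟩)
    exacts [hα, hval r hr y hy hβr]

theorem bddBelow_lowerInv_set (u : ℝ → ℝ) (x : ℝ) :
    BddBelow (insert 1 {y | y ∈ Icc (0:ℝ) 1 ∧ x ≤ u y}) :=
  ⟨0, by rintro r (rfl | ⟨hr, -⟩) <;> simp_all⟩

theorem lowerInv_mem_Icc (u : ℝ → ℝ) (x : ℝ) : lowerInv u x ∈ Icc (0:ℝ) 1 :=
  ⟨le_csInf (insert_nonempty _ _) (by rintro r (rfl | ⟨hr, -⟩) <;> simp_all),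
    csInf_le (bddBelow_lowerInv_set u x) (mem_insert _ _)⟩

theorem monotone_lowerInv (u : ℝ → ℝ) : Monotone (lowerInv u) := fun _ _ hxx =>
  csInf_le_csInf (bddBelow_lowerInv_set u _) (insert_nonempty _ _)
    (insert_subset_insert fun _ hy => ⟨hy.1, hxx.trans hy.2⟩)

theorem lowerInv_le {x y : ℝ} (hy : y ∈ Icc (0:ℝ) 1) (hxy : x ≤ u y) : lowerInv u x ≤ y :=
  csInf_le (bddBelow_lowerInv_set u x) (mem_insert_of_mem _ ⟨hy, hxy⟩)

theorem le_of_lowerInv_lt (hu : Monotone u) {x c : ℝ} (hlt : lowerInv u x < c) (hc : c ≤ 1) :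
    x ≤ u c := by
  obtain ⟨y, hy, hyc⟩ := exists_lt_of_csInf_lt (insert_nonempty _ _) hlt
  rcases hy with rfl | ⟨-, hxy⟩
  · linarith
  · exact hxy.trans (hu hyc.le)

theorem lowerInv_minValidAlpha_le {x : ℝ} (hx : x ∈ Icc (0:ℝ) 1) (hβ : β x ∈ Icc (0:ℝ) 1) :
    lowerInv (minValidAlpha β) x ≤ β x :=
  lowerInv_le hβ (le_minValidAlpha_apply hx)

end Threshold

theorem validPairC_gridStep {u : ℝ → ℝ} (hu : Monotone u) (hu0 : ∀ y, 0 ≤ u y) {n : ℕ}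
    (hn : 0 < n) {A B : ℕ → ℝ} (hA : ∀ k < n, A k ∈ Icc (u (((k : ℝ) + 1) / n)) 1)
    (hB : ∀ k < n, B k ∈ Icc (lowerInv u (((k : ℝ) + 1) / n)) 1) :
    ValidPairC (gridStep A n) (gridStep B n) := by
  refine ⟨measurable_gridStep A n, measurable_gridStep B n,
    fun y => gridStep_mem_Icc hn fun k hk => ⟨(hu0 _).trans (hA k hk).1, (hA k hk).2⟩,
    fun x => gridStep_mem_Icc hn fun k hk =>
      ⟨(lowerInv_mem_Icc u _).1.trans (hB k hk).1, (hB k hk).2⟩, ?_⟩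
  intro x hx y hy hle
  rcases hy.2.lt_or_eq with hy1 | rfl
  swap
  · rw [gridStep_one]; exact hx.2
  rcases hx.2.lt_or_eq with hx1 | rfl
  swap
  · rw [gridStep_one] at hle; linarith
  rw [gridStep, if_pos hx1] at hle
  rw [gridStep, if_pos hy1]
  have hk := floor_mul_lt ⟨hy.1, hy1⟩ hn
  have hlt : lowerInv u ((⌊x * n⌋₊ + 1) / n) < (⌊y * n⌋₊ + 1) / n :=
    (hB _ (floor_mul_lt ⟨hx.1, hx1⟩ hn)).1.trans_lt
      (hle.trans_lt (lt_floor_mul_add_one_div y hn))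
  calc x ≤ (⌊x * n⌋₊ + 1) / n := (lt_floor_mul_add_one_div x hn).le
    _ ≤ u ((⌊y * n⌋₊ + 1) / n) :=
      le_of_lowerInv_lt hu hlt ((div_le_one₀ (by exact_mod_cast hn)).2 (by exact_mod_cast hk))
    _ ≤ A ⌊y * n⌋₊ := (hA _ hk).1

section GridApproximation

variable {R : ℝ → ℝ → ℝ} {L : NNReal}

theorem le_add_of_isMaxOn (hR : LipschitzOnWith L (uncurry R) unitSquare) {a b x w y y₀ : ℝ}
    (ha : 0 ≤ a) (hab : a ≤ b) (hx : x ∈ Icc b 1) (hmax : IsMaxOn (R · y₀) (Icc b 1) x)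
    (hw : w ∈ Icc a 1) (hy : y ∈ Icc (0:ℝ) 1) (hy₀ : y₀ ∈ Icc (0:ℝ) 1) :
    R w y ≤ R x y + L * (b - a + 2 * |y - y₀|) := by
  have hlip : ∀ p ∈ unitSquare, ∀ q ∈ unitSquare,
      R p.1 p.2 ≤ R q.1 q.2 + L * (|p.1 - q.1| + |p.2 - q.2|) := fun p hp q hq => by
    have h : |R p.1 p.2 - R q.1 q.2| ≤ L * max |p.1 - q.1| |p.2 - q.2| := by
      have h := hR.dist_le_mul p hp q hq
      rwa [Real.dist_eq, Prod.dist_eq, Real.dist_eq, Real.dist_eq] at h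
    have hmax := max_le_add_of_nonneg (abs_nonneg (p.1 - q.1)) (abs_nonneg (p.2 - q.2))
    have := mul_le_mul_of_nonneg_left hmax L.coe_nonneg
    linarith [le_abs_self (R p.1 p.2 - R q.1 q.2)]
  have hb0 : 0 ≤ b := ha.trans hab
  -- move `w` up into `[b, 1]`, where `x` is the maximiser
  have hw' : max w b ∈ Icc b 1 := ⟨le_max_right _ _, max_le hw.2 (hx.1.trans hx.2)⟩
  have hshift : |w - max w b| ≤ b - a := by
    rcases le_total w b with hwb | hbw
    · rw [max_eq_right hwb, abs_of_nonpos (by linarith)]; linarith [hw.1]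
    · rw [max_eq_left hbw, sub_self, abs_zero]; linarith
  have h1 := hlip (w, y) ⟨⟨ha.trans hw.1, hw.2⟩, hy⟩ (max w b, y₀) ⟨⟨hb0.trans hw'.1, hw'.2⟩, hy₀⟩
  have h2 : R (max w b) y₀ ≤ R x y₀ := hmax hw'
  have h3 := hlip (x, y₀) ⟨⟨hb0.trans hx.1, hx.2⟩, hy₀⟩ (x, y) ⟨⟨hb0.trans hx.1, hx.2⟩, hy⟩
  simp only [sub_self, abs_zero, zero_add, abs_sub_comm y₀ y] at h1 h3
  have := mul_le_mul_of_nonneg_left hshift L.coe_nonneg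
  linarith

theorem integral_cell_le (hR : LipschitzOnWith L (uncurry R) unitSquare) {u : ℝ → ℝ}
    (hu : Monotone u) (hu01 : ∀ y, u y ∈ Icc (0:ℝ) 1) {n k : ℕ} (hk : k < n) {A : ℕ → ℝ}
    (hA : A k ∈ Icc (u (((k : ℝ) + 1) / n)) 1)
    (hmax : IsMaxOn (R · (k / n)) (Icc (u (((k : ℝ) + 1) / n)) 1) (A k)) {v : ℝ → ℝ}
    (hvu : ∀ y ∈ Icc (0:ℝ) 1, v y ∈ Icc (u y) 1)
    (hF : IntervalIntegrable (fun y => R (v y) y) volume 0 1)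
    (hG : IntervalIntegrable (fun y => R (gridStep A n y) y) volume 0 1) :
    ∫ y in (k : ℝ) / n..((k : ℝ) + 1) / n, R (v y) y
      ≤ (∫ y in (k : ℝ) / n..((k : ℝ) + 1) / n, R (gridStep A n y) y)
        + L * (u (((k : ℝ) + 1) / n) - u (k / n) + 2 / n) / n := by
  have hn : (0 : ℝ) < n := by exact_mod_cast (k.zero_le.trans_lt hk)
  have hwidth : ((k : ℝ) + 1) / n - k / n = 1 / n := by field_simp; ring
  have ha0 : (0 : ℝ) ≤ k / n := by positivity
  have hb1 : ((k : ℝ) + 1) / n ≤ 1 := (div_le_one₀ hn).2 (by exact_mod_cast hk)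
  have hab : (k : ℝ) / n ≤ ((k : ℝ) + 1) / n := by linarith [(by positivity : (0:ℝ) ≤ 1 / n)]
  have hsub : uIcc ((k : ℝ) / n) (((k : ℝ) + 1) / n) ⊆ uIcc 0 1 := by
    rw [uIcc_of_le hab, uIcc_of_le zero_le_one]; exact Icc_subset_Icc ha0 hb1
  have hpoint : ∀ y ∈ Ico ((k : ℝ) / n) (((k : ℝ) + 1) / n),
      R (v y) y ≤ R (gridStep A n y) y + L * (u (((k : ℝ) + 1) / n) - u (k / n) + 2 / n) := by
    intro y hy
    have hy01 : y ∈ Icc (0:ℝ) 1 := ⟨ha0.trans hy.1, hy.2.le.trans hb1⟩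
    have hdist : |y - k / n| ≤ 1 / n := by
      rw [abs_of_nonneg (by linarith [hy.1])]; linarith [hy.2]
    rw [gridStep_eq_of_mem_Ico hk hy]
    calc R (v y) y ≤ R (A k) y + L * (u (((k : ℝ) + 1) / n) - u (k / n) + 2 * |y - k / n|) :=
          le_add_of_isMaxOn hR (hu01 _).1 (hu hab) hA hmax
            ⟨(hu hy.1).trans (hvu y hy01).1, (hvu y hy01).2⟩ hy01 ⟨ha0, hab.trans hb1⟩
      _ ≤ _ := by gcongr; linarith [show (2:ℝ) / n = 2 * (1 / n) by ring]
  have hae : ∀ᵐ y ∂volume.restrict (Icc ((k : ℝ) / n) (((k : ℝ) + 1) / n)),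
      R (v y) y ≤ R (gridStep A n y) y + L * (u (((k : ℝ) + 1) / n) - u (k / n) + 2 / n) := by
    rw [Measure.restrict_congr_set Ico_ae_eq_Icc.symm]
    filter_upwards [ae_restrict_mem measurableSet_Ico] using hpoint
  calc ∫ y in (k : ℝ) / n..((k : ℝ) + 1) / n, R (v y) y
      ≤ ∫ y in (k : ℝ) / n..((k : ℝ) + 1) / n,
          (R (gridStep A n y) y + L * (u (((k : ℝ) + 1) / n) - u (k / n) + 2 / n)) :=
        intervalIntegral.integral_mono_ae_restrict hab (hF.mono_set hsub)
          ((hG.mono_set hsub).add intervalIntegrable_const) hae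
    _ = _ := by
        rw [intervalIntegral.integral_add (hG.mono_set hsub) intervalIntegrable_const,
          intervalIntegral.integral_const, smul_eq_mul, hwidth]
        ring

theorem exists_gridStep_integral_le (hR : LipschitzOnWith L (uncurry R) unitSquare)
    {u : ℝ → ℝ} (hu : Monotone u)
    (hu01 : ∀ y, u y ∈ Icc (0:ℝ) 1) {n : ℕ} (hn : 0 < n) {v : ℝ → ℝ} (hv : Measurable v)
    (hvu : ∀ y ∈ Icc (0:ℝ) 1, v y ∈ Icc (u y) 1) :
    ∃ A : ℕ → ℝ, (∀ k < n, A k ∈ Icc (u (((k : ℝ) + 1) / n)) 1) ∧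
      ∫ y in (0:ℝ)..1, R (v y) y ≤ (∫ y in (0:ℝ)..1, R (gridStep A n y) y) + 3 * L / n := by
  have hn' : (0 : ℝ) < n := by exact_mod_cast hn
  have hmax (k : ℕ) : ∃ a ∈ Icc (u (((k : ℝ) + 1) / n)) 1,
      k < n → IsMaxOn (R · (k / n)) (Icc (u (((k : ℝ) + 1) / n)) 1) a := by
    by_cases hk : k < n
    · have hy₀ : (k : ℝ) / n ∈ Icc (0:ℝ) 1 :=
        ⟨by positivity, (div_le_one₀ hn').2 (by exact_mod_cast hk.le)⟩
      obtain ⟨a, ha, hmax⟩ := isCompact_Icc.exists_isMaxOn (nonempty_Icc.2 (hu01 _).2)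
        ((hR.comp_prodMk_right hy₀).continuousOn.mono (Icc_subset_Icc (hu01 _).1 le_rfl))
      exact ⟨a, ha, fun _ => hmax⟩
    · exact ⟨1, ⟨(hu01 _).2, le_rfl⟩, fun hk' => absurd hk' hk⟩
  choose A hA hAmax using hmax
  refine ⟨A, fun k _ => hA k, ?_⟩
  have hF := intervalIntegrable_comp_of_continuousOn hR.continuousOn hv
    fun y hy => ⟨(hu01 y).1.trans (hvu y hy).1, (hvu y hy).2⟩
  have hG := intervalIntegrable_comp_of_continuousOn hR.continuousOn (measurable_gridStep A n)
    fun y => gridStep_mem_Icc hn (fun k _ => ⟨(hu01 _).1.trans (hA k).1, (hA k).2⟩)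
  have htelescope : ∑ k ∈ Finset.range n, (u (((k : ℝ) + 1) / n) - u (k / n)) = u 1 - u 0 := by
    simpa [hn'.ne'] using Finset.sum_range_sub (fun k : ℕ => u ((k : ℝ) / n)) n
  have herror : ∑ k ∈ Finset.range n, L * (u (((k : ℝ) + 1) / n) - u (k / n) + 2 / n) / n
      ≤ 3 * L / n := by
    rw [← Finset.sum_div, ← Finset.mul_sum, Finset.sum_add_distrib, htelescope,
      Finset.sum_const, Finset.card_range, nsmul_eq_mul, mul_div_cancel₀ _ hn'.ne']
    have hrange : u 1 - u 0 + 2 ≤ 3 := by linarith [(hu01 1).2, (hu01 0).1]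
    rw [mul_comm 3]
    gcongr
  rw [intervalIntegral_eq_sum_cells hF hn, intervalIntegral_eq_sum_cells hG hn]
  calc ∑ k ∈ Finset.range n, ∫ y in (k : ℝ) / n..((k : ℝ) + 1) / n, R (v y) y
      ≤ ∑ k ∈ Finset.range n, ((∫ y in (k : ℝ) / n..((k : ℝ) + 1) / n, R (gridStep A n y) y)
          + L * (u (((k : ℝ) + 1) / n) - u (k / n) + 2 / n) / n) :=
        Finset.sum_le_sum fun k hk => integral_cell_le hR hu hu01 (Finset.mem_range.1 hk) (hA k)
          (hAmax k (Finset.mem_range.1 hk)) hvu hF hG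
    _ ≤ _ := by rw [Finset.sum_add_distrib]; gcongr

end GridApproximation

theorem profit_eq_add_revF_flip (α β : ℝ → ℝ) (φ : ℝ → ℝ → ℝ) :
    Profit α β φ = (∫ y in (0:ℝ)..1, RevF φ (α y) y) + ∫ x in (0:ℝ)..1, RevF (flip φ) (β x) x :=
  rfl

theorem validPairC_one : ValidPairC (fun _ => 1) (fun _ => 1) :=
  ⟨measurable_const, measurable_const, fun _ _ => ⟨zero_le_one, le_rfl⟩,
    fun _ _ => ⟨zero_le_one, le_rfl⟩, fun _ hx _ _ _ => hx.2⟩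

theorem gridStep_eq_gridStep_of_mem_Ico {A : ℕ → ℝ} {n k : ℕ} (hk : k < n) {y : ℝ}
    (hy : y ∈ Ico ((k : ℝ) / n) (((k : ℝ) + 1) / n)) :
    gridStep A n y = gridStep A n ((k : ℝ) / n) := by
  have hn : (0 : ℝ) < n := by exact_mod_cast (k.zero_le.trans_lt hk)
  rw [gridStep_eq_of_mem_Ico hk hy,
    gridStep_eq_of_mem_Ico hk ⟨le_rfl, div_lt_div_of_pos_right (lt_add_one _) hn⟩]

theorem grid_auctions_near_optimal_general
    (φ : ℝ → ℝ → ℝ)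
    (hφlip : ∃ K : NNReal, LipschitzOnWith K (fun p : ℝ × ℝ => φ p.1 p.2)
      (Set.Icc (0:ℝ) 1 ×ˢ Set.Icc (0:ℝ) 1)) :
    ∃ c : ℝ, ∀ n : ℕ, 2 ≤ n →
      ∃ α β : ℝ → ℝ, ValidPairC α β ∧
        (∀ k : ℕ, k < n → ∀ y ∈ Set.Ico ((k : ℝ) / n) (((k : ℝ) + 1) / n),
          α y = α ((k : ℝ) / n)) ∧
        (∀ k : ℕ, k < n → ∀ x ∈ Set.Ico ((k : ℝ) / n) (((k : ℝ) + 1) / n),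
          β x = β ((k : ℝ) / n)) ∧
        Profit α β φ ≥
          sSup {r : ℝ | ∃ α' β' : ℝ → ℝ, ValidPairC α' β' ∧
              r = Profit α' β' φ}
            - c / n := by
  obtain ⟨K, hφ⟩ := hφlip
  set L : NNReal := 2 * (‖φ 0 0‖₊ + K) + K
  have hR : LipschitzOnWith L (uncurry (RevF φ)) unitSquare := RevF.lipschitzOnWith hφ
  have hRflip : LipschitzOnWith L (uncurry (RevF (flip φ))) unitSquare :=
    RevF.lipschitzOnWith (LipschitzOnWith.uncurry_flip hφ)
  refine ⟨1 + 6 * L, fun n hn2 => ?_⟩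
  have hn : 0 < n := by omega
  have hprofits : {r : ℝ | ∃ α' β' : ℝ → ℝ, ValidPairC α' β' ∧ r = Profit α' β' φ}.Nonempty :=
    ⟨_, _, _, validPairC_one, rfl⟩
  obtain ⟨_, ⟨α, β, ⟨hαm, hβm, hαI, hβI, hval⟩, rfl⟩, hnear⟩ :=
    exists_lt_of_lt_csSup hprofits (sub_lt_self _ (by positivity : (0:ℝ) < 1 / n))
  obtain ⟨A, hA, hαA⟩ := exists_gridStep_integral_le hR (monotone_minValidAlpha β)
    (minValidAlpha_mem_Icc β) hn hαm
    fun y hy => ⟨minValidAlpha_le hval hy (hαI y hy).1, (hαI y hy).2⟩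
  obtain ⟨B, hB, hβB⟩ := exists_gridStep_integral_le hRflip
    (monotone_lowerInv (minValidAlpha β)) (lowerInv_mem_Icc _) hn hβm
    fun x hx => ⟨lowerInv_minValidAlpha_le hx (hβI x hx), (hβI x hx).2⟩
  refine ⟨gridStep A n, gridStep B n, validPairC_gridStep (monotone_minValidAlpha β)
    (fun y => (minValidAlpha_mem_Icc β y).1) hn hA hB,
    fun k hk _ => gridStep_eq_gridStep_of_mem_Ico hk,
    fun k hk _ => gridStep_eq_gridStep_of_mem_Ico hk, ?_⟩
  rw [profit_eq_add_revF_flip] at hnear ⊢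
  have hc : (1 + 6 * L) / n = 1 / n + 3 * L / n + 3 * L / n := by ring
  linarith

/-- near-optimality of grid auctions: there is a constant `c`
(depending only on `φ`) such that for every `n ≥ 2` some valid allocation pair
whose curves are constant on each interval `[k/n, (k+1)/n)` extracts profit
within `c/n` of the optimum over all valid allocation pairs. -/
theorem grid_auctions_near_optimal
    (φ f g : ℝ → ℝ → ℝ)
    (hφlip : ∃ K : NNReal, LipschitzOnWith K (fun p : ℝ × ℝ => φ p.1 p.2)
      (Set.Icc (0:ℝ) 1 ×ˢ Set.Icc (0:ℝ) 1))
    (hφpos : ∀ p ∈ (Set.Icc (0:ℝ) 1 ×ˢ Set.Icc (0:ℝ) 1), 0 < φ p.1 p.2)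
    (hmpc : IsMPC φ f g)
    (hf1 : ∀ x y, f x y ≤ 1) (hg1 : ∀ x y, g x y ≤ 1) :
    ∃ c : ℝ, ∀ n : ℕ, 2 ≤ n →
      ∃ α β : ℝ → ℝ, ValidPairC α β ∧
        (∀ k : ℕ, k < n → ∀ y ∈ Set.Ico ((k : ℝ) / n) (((k : ℝ) + 1) / n),
          α y = α ((k : ℝ) / n)) ∧
        (∀ k : ℕ, k < n → ∀ x ∈ Set.Ico ((k : ℝ) / n) (((k : ℝ) + 1) / n),
          β x = β ((k : ℝ) / n)) ∧
        Profit α β φ ≥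
          sSup {r : ℝ | ∃ α' β' : ℝ → ℝ, ValidPairC α' β' ∧
              r = Profit α' β' φ}
            - c / n :=
  grid_auctions_near_optimal_general φ hφlip
end

section
/- Equivalence of three-bidder optimal auction design and the segment-packing problem: the maximum, over all monotone allocations A : [S]³ → {0,1,2,3}, of the threshold profit of A equals the maximum, over all finite collections of pairwise disjoint segments induced by φ, of the total weight of the collection. -/
/-- The valuation grid `[S]³`. -/
def grid3 (S : ℕ) : Finset (ℕ × ℕ × ℕ) :=
  Finset.Icc 1 S ×ˢ Finset.Icc 1 S ×ˢ Finset.Icc 1 S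

/-- The set of points of a segment: a segment is a direction `d : Fin 3`
together with its apex `(x,y,z)`; e.g. an `x`-segment with apex `(x,y,z)`
consists of the points `(x',y,z)` with `x ≤ x' ≤ S`. -/
def segPts (S : ℕ) (s : Fin 3 × (ℕ × ℕ × ℕ)) : Finset (ℕ × ℕ × ℕ) :=
  if s.1 = 0 then (Finset.Icc s.2.1 S).image (fun x' => (x', s.2.2.1, s.2.2.2))
  else if s.1 = 1 then (Finset.Icc s.2.2.1 S).image (fun y' => (s.2.1, y', s.2.2.2))
  else (Finset.Icc s.2.2.2 S).image (fun z' => (s.2.1, s.2.2.1, z'))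

/-- The weight of a segment. -/
def segWt (S : ℕ) (f g h : ℕ → ℕ → ℕ → ℝ) (s : Fin 3 × (ℕ × ℕ × ℕ)) : ℝ :=
  if s.1 = 0 then ∑ x' ∈ Finset.Icc s.2.1 S, f x' s.2.2.1 s.2.2.2
  else if s.1 = 1 then ∑ y' ∈ Finset.Icc s.2.2.1 S, g s.2.1 y' s.2.2.2
  else ∑ z' ∈ Finset.Icc s.2.2.2 S, h s.2.1 s.2.2.1 z'

/-- A segment is induced by `φ` (via the marginal profit contribution
functions `f`, `g`, `h`): its apex lies in `[S]³` and has strictly positive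
marginal profit contribution in the segment's direction. -/
def ValidSeg (S : ℕ) (f g h : ℕ → ℕ → ℕ → ℝ) (s : Fin 3 × (ℕ × ℕ × ℕ)) : Prop :=
  s.2 ∈ grid3 S ∧
  (if s.1 = 0 then 0 < f s.2.1 s.2.2.1 s.2.2.2
   else if s.1 = 1 then 0 < g s.2.1 s.2.2.1 s.2.2.2
   else 0 < h s.2.1 s.2.2.1 s.2.2.2)

/-- An allocation `A : [S]³ → {0,1,2,3}` is monotone. -/
def Mono3 (S : ℕ) (A : ℕ → ℕ → ℕ → ℕ) : Prop :=
  (∀ x y z, (x, y, z) ∈ grid3 S → A x y z = 1 →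
    ∀ x', x ≤ x' → x' ≤ S → A x' y z = 1) ∧
  (∀ x y z, (x, y, z) ∈ grid3 S → A x y z = 2 →
    ∀ y', y ≤ y' → y' ≤ S → A x y' z = 2) ∧
  (∀ x y z, (x, y, z) ∈ grid3 S → A x y z = 3 →
    ∀ z', z ≤ z' → z' ≤ S → A x y z' = 3)

/-- The threshold profit of an allocation `A` for the distribution `φ`. -/
noncomputable def profit3 (S : ℕ) (φ : ℕ → ℕ → ℕ → ℝ) (A : ℕ → ℕ → ℕ → ℕ) : ℝ :=
  (∑ p ∈ (grid3 S).filter (fun p => A p.1 p.2.1 p.2.2 = 1),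
    φ p.1 p.2.1 p.2.2 * (sInf {x' | 1 ≤ x' ∧ A x' p.2.1 p.2.2 = 1} : ℕ)) +
  (∑ p ∈ (grid3 S).filter (fun p => A p.1 p.2.1 p.2.2 = 2),
    φ p.1 p.2.1 p.2.2 * (sInf {y' | 1 ≤ y' ∧ A p.1 y' p.2.2 = 2} : ℕ)) +
  (∑ p ∈ (grid3 S).filter (fun p => A p.1 p.2.1 p.2.2 = 3),
    φ p.1 p.2.1 p.2.2 * (sInf {z' | 1 ≤ z' ∧ A p.1 p.2.1 z' = 3} : ℕ))

/-!
Everything splits into lines parallel to a coordinate axis. Along one line, with weights `w`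
and marginal contributions `u`, the tail sums `U x = ∑_{t ≥ x} u t` satisfy
`U x = max (x * ∑_{t ≥ x} w t) (U (x + 1))`, with the first argument attained when `u x > 0`.
A monotone allocation gives a line to one bidder from a threshold `τ` on and earns
`τ * ∑_{t ≥ τ} w t ≤ U τ`; since `u ≥ 0`, `U τ` is the weight of the segment starting at the
first point at or after `τ` where the bidder keeps winning and `u > 0`, and these segments are
disjoint. Conversely, allocating each segment of a packing to its bidder earns exactly its
weight, because segments start where `u > 0`. So each side's values are dominated by the
other's, and the suprema agree.
-/

open Finset

namespace ThreeBidder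

def coord : Fin 3 → ℕ × ℕ × ℕ → ℕ
  | 0, p => p.1
  | 1, p => p.2.1
  | 2, p => p.2.2

def setCoord : Fin 3 → ℕ × ℕ × ℕ → ℕ → ℕ × ℕ × ℕ
  | 0, p, t => (t, p.2.1, p.2.2)
  | 1, p, t => (p.1, t, p.2.2)
  | 2, p, t => (p.1, p.2.1, t)

def uncurry3 {α : Type*} (F : ℕ → ℕ → ℕ → α) (p : ℕ × ℕ × ℕ) : α := F p.1 p.2.1 p.2.2

def marg (f g h : ℕ → ℕ → ℕ → ℝ) (d : Fin 3) : ℕ × ℕ × ℕ → ℝ := uncurry3 (![f, g, h] d)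

def lineBase (S : ℕ) (d : Fin 3) : Finset (ℕ × ℕ × ℕ) := (grid3 S).filter (coord d · = 1)

section Geometry

variable {S : ℕ} {d : Fin 3} {p q : ℕ × ℕ × ℕ} {s t : ℕ}

@[simp] lemma coord_setCoord : coord d (setCoord d p t) = t := by fin_cases d <;> rfl

@[simp] lemma setCoord_setCoord : setCoord d (setCoord d p s) t = setCoord d p t := by
  fin_cases d <;> rfl

@[simp] lemma setCoord_coord : setCoord d p (coord d p) = p := by fin_cases d <;> rfl

lemma setCoord_eq_self (h : coord d p = t) : setCoord d p t = p := h ▸ setCoord_coord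

lemma setCoord_mem_grid3 : setCoord d p t ∈ grid3 S ↔ setCoord d p 1 ∈ grid3 S ∧ t ∈ Icc 1 S := by
  fin_cases d <;> simp [setCoord, grid3] <;> omega

lemma setCoord_mem_grid3_of_mem_lineBase (hq : q ∈ lineBase S d) (ht : t ∈ Icc 1 S) :
    setCoord d q t ∈ grid3 S := by
  obtain ⟨hq, hq1⟩ := mem_filter.1 hq
  rw [setCoord_mem_grid3, setCoord_eq_self hq1]
  exact ⟨hq, ht⟩

lemma sum_grid3_eq_sum_lineBase {M : Type*} [AddCommMonoid M] (d : Fin 3) (G : ℕ × ℕ × ℕ → M) :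
    ∑ p ∈ grid3 S, G p = ∑ q ∈ lineBase S d, ∑ t ∈ Icc 1 S, G (setCoord d q t) := by
  rw [← sum_product']
  refine sum_nbij' (fun p => (setCoord d p 1, coord d p)) (fun x => setCoord d x.1 x.2)
    ?_ ?_ ?_ ?_ (fun p _ => by simp)
  · intro p hp
    rw [← setCoord_coord (d := d) (p := p), setCoord_mem_grid3] at hp
    simp_all [lineBase]
  · rintro ⟨q, t⟩ hqt
    exact setCoord_mem_grid3_of_mem_lineBase (mem_product.1 hqt).1 (mem_product.1 hqt).2
  · simp
  · rintro ⟨q, t⟩ hqt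
    simp only [mem_product, lineBase, mem_filter] at hqt
    simp [setCoord_eq_self hqt.1.2]

lemma mem_segPts : q ∈ segPts S (d, p) ↔ ∃ t ∈ Icc (coord d p) S, setCoord d p t = q := by
  rw [← mem_image]
  fin_cases d <;> rfl

lemma segWt_eq (f g h : ℕ → ℕ → ℕ → ℝ) :
    segWt S f g h (d, p) = ∑ t ∈ Icc (coord d p) S, marg f g h d (setCoord d p t) := by
  fin_cases d <;> rfl

lemma validSeg_iff (f g h : ℕ → ℕ → ℕ → ℝ) :
    ValidSeg S f g h (d, p) ↔ p ∈ grid3 S ∧ 0 < marg f g h d p := by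
  fin_cases d <;> rfl

lemma mono3_iff (A : ℕ → ℕ → ℕ → ℕ) :
    Mono3 S A ↔ ∀ (d : Fin 3) p, p ∈ grid3 S → uncurry3 A p = d + 1 →
      ∀ t ∈ Icc (coord d p) S, uncurry3 A (setCoord d p t) = d + 1 := by
  simp [Mono3, Fin.forall_fin_succ, uncurry3, coord, setCoord]

end Geometry

def IsMarginalContribution (S : ℕ) (w u : ℕ → ℝ) : Prop :=
  ∀ x, u x = max ((x : ℝ) * ∑ x' ∈ Icc x S, w x' - ∑ x' ∈ Icc (x + 1) S, u x') 0

noncomputable def lineProfit (S : ℕ) (w : ℕ → ℝ) (B : ℕ → Prop) [DecidablePred B] : ℝ :=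
  ∑ t ∈ Icc 1 S, if B t then w t * (sInf {t' | 1 ≤ t' ∧ B t'} : ℕ) else 0

lemma sum_Icc_eq_sum_Icc_of_eq_zero {S a b : ℕ} {v : ℕ → ℝ} (hab : a ≤ b) (hb : b ≤ S + 1)
    (hv : ∀ t, a ≤ t → t < b → v t = 0) :
    ∑ t ∈ Icc a S, v t = ∑ t ∈ Icc b S, v t := by
  rw [← Ico_add_one_right_eq_Icc, ← Ico_add_one_right_eq_Icc, ← sum_Ico_consecutive v hab hb,
    sum_eq_zero fun t ht => hv t (mem_Ico.1 ht).1 (mem_Ico.1 ht).2, zero_add]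

namespace IsMarginalContribution

variable {S x : ℕ} {w u : ℕ → ℝ}

lemma nonneg (hu : IsMarginalContribution S w u) (t : ℕ) : 0 ≤ u t :=
  (hu t).symm ▸ le_max_right _ _

lemma sum_Icc_eq_max (hu : IsMarginalContribution S w u) (hx : x ≤ S) :
    ∑ t ∈ Icc x S, u t = max ((x : ℝ) * ∑ t ∈ Icc x S, w t) (∑ t ∈ Icc (x + 1) S, u t) := by
  rw [← add_sum_Ioc_eq_sum_Icc hx, ← Icc_add_one_left_eq_Ioc, hu x, ← max_add_add_right,
    sub_add_cancel, zero_add]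

lemma mul_sum_le_sum (hu : IsMarginalContribution S w u) (hx : x ≤ S) :
    (x : ℝ) * ∑ t ∈ Icc x S, w t ≤ ∑ t ∈ Icc x S, u t :=
  (hu.sum_Icc_eq_max hx).symm ▸ le_max_left _ _

lemma sum_eq_mul_sum_of_pos (hu : IsMarginalContribution S w u) (hx : x ≤ S) (hpos : 0 < u x) :
    ∑ t ∈ Icc x S, u t = (x : ℝ) * ∑ t ∈ Icc x S, w t := by
  have hux := hu x
  rw [hux, lt_max_iff, lt_self_iff_false, or_false] at hpos
  rw [← add_sum_Ioc_eq_sum_Icc hx, ← Icc_add_one_left_eq_Ioc, hux, max_eq_left hpos.le,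
    sub_add_cancel]

end IsMarginalContribution

section Line

variable {S : ℕ} {w u : ℕ → ℝ} {B : ℕ → Prop} [DecidablePred B]

lemma lineProfit_eq_of_isLeast {τ : ℕ} (hτ : IsLeast {t | 1 ≤ t ∧ B t} τ)
    (hup : ∀ t, τ ≤ t → t ≤ S → B t) :
    lineProfit S w B = τ * ∑ t ∈ Icc τ S, w t := by
  have hfilter : (Icc 1 S).filter B = Icc τ S := by
    ext t
    simp only [mem_filter, mem_Icc]
    exact ⟨fun ⟨⟨h1, hS⟩, hB⟩ => ⟨hτ.2 ⟨h1, hB⟩, hS⟩,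
      fun ⟨hτt, hS⟩ => ⟨⟨hτ.1.1.trans hτt, hS⟩, hup t hτt hS⟩⟩
  rw [lineProfit, ← sum_filter, hfilter, hτ.csInf_eq, mul_sum]
  exact sum_congr rfl fun _ _ => mul_comm _ _

lemma lineProfit_eq_zero (hB : ∀ t ∈ Icc 1 S, ¬ B t) : lineProfit S w B = 0 :=
  sum_eq_zero fun t ht => if_neg (hB t ht)

lemma lineProfit_eq_sum_of_ray (hu : IsMarginalContribution S w u) {P : ℕ → Prop}
    [DecidablePred P] (hP : ∀ a, P a → a ∈ Icc 1 S ∧ 0 < u a)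
    (hPuniq : ∀ a b, P a → P b → a = b) (hB : ∀ t, B t ↔ ∃ a, P a ∧ a ≤ t ∧ t ≤ S) :
    lineProfit S w B = ∑ a ∈ Icc 1 S, if P a then ∑ t ∈ Icc a S, u t else 0 := by
  by_cases hex : ∃ a, P a
  · obtain ⟨a, ha⟩ := hex
    obtain ⟨haI, hau⟩ := hP a ha
    have haS := (mem_Icc.1 haI).2
    have hleast : IsLeast {t | 1 ≤ t ∧ B t} a := by
      refine ⟨⟨(mem_Icc.1 haI).1, (hB a).2 ⟨a, ha, le_rfl, haS⟩⟩, fun t ⟨_, hBt⟩ => ?_⟩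
      obtain ⟨b, hb, hbt, -⟩ := (hB t).1 hBt
      exact hPuniq a b ha hb ▸ hbt
    rw [lineProfit_eq_of_isLeast hleast fun t hat htS => (hB t).2 ⟨a, ha, hat, htS⟩,
      sum_eq_single_of_mem a haI fun b _ hba => if_neg fun hb => hba (hPuniq b a hb ha),
      if_pos ha, hu.sum_eq_mul_sum_of_pos haS hau]
  · simp only [not_exists] at hex
    rw [lineProfit_eq_zero fun t _ hBt => ?_, sum_eq_zero fun a _ => if_neg (hex a)]
    obtain ⟨a, ha, -⟩ := (hB t).1 hBt
    exact hex a ha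

lemma lineProfit_le_sum_of_isLeast (hu : IsMarginalContribution S w u) {P : ℕ → Prop}
    [DecidablePred P] (hup : ∀ t ∈ Icc 1 S, B t → ∀ t' ∈ Icc t S, B t')
    (hP : ∀ a, P a ↔ IsLeast {t | t ∈ Icc 1 S ∧ B t ∧ 0 < u t} a) :
    lineProfit S w B ≤ ∑ a ∈ Icc 1 S, if P a then ∑ t ∈ Icc a S, u t else 0 := by
  have hRHS : 0 ≤ ∑ a ∈ Icc 1 S, if P a then ∑ t ∈ Icc a S, u t else 0 :=
    sum_nonneg fun a _ => by
      split_ifs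
      exacts [sum_nonneg fun t _ => hu.nonneg t, le_rfl]
  by_cases hex : ∃ t ∈ Icc 1 S, B t
  swap
  · simp only [not_exists, not_and] at hex
    rw [lineProfit_eq_zero hex]
    exact hRHS
  obtain ⟨t₀, ht₀, hBt₀⟩ := hex
  have hτ : IsLeast {t | 1 ≤ t ∧ B t} (sInf {t | 1 ≤ t ∧ B t}) :=
    ⟨Nat.sInf_mem ⟨t₀, (mem_Icc.1 ht₀).1, hBt₀⟩, fun _ => Nat.sInf_le⟩
  set τ := sInf {t | 1 ≤ t ∧ B t}
  have hτS : τ ≤ S := (hτ.2 ⟨(mem_Icc.1 ht₀).1, hBt₀⟩).trans (mem_Icc.1 ht₀).2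
  have hupτ : ∀ t, τ ≤ t → t ≤ S → B t := fun t hτt htS =>
    hup τ (mem_Icc.2 ⟨hτ.1.1, hτS⟩) hτ.1.2 t (mem_Icc.2 ⟨hτt, htS⟩)
  rw [lineProfit_eq_of_isLeast hτ hupτ]
  refine (hu.mul_sum_le_sum hτS).trans ?_
  set X := {t | t ∈ Icc 1 S ∧ B t ∧ 0 < u t}
  -- Between the threshold `τ` and the first point of `X`, the allocation holds but `u` vanishes.
  have hskip : ∀ b, τ ≤ b → b ≤ S + 1 → (∀ t ∈ X, b ≤ t) →
      ∑ t ∈ Icc τ S, u t = ∑ t ∈ Icc b S, u t := by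
    intro b hτb hbS hb
    refine sum_Icc_eq_sum_Icc_of_eq_zero hτb hbS fun t hτt htb => ?_
    refine le_antisymm (not_lt.1 fun hpos => ?_) (hu.nonneg t)
    have htS : t ≤ S := by omega
    exact (hb t ⟨mem_Icc.2 ⟨hτ.1.1.trans hτt, htS⟩, hupτ t hτt htS, hpos⟩).not_gt htb
  by_cases hX : X.Nonempty
  · have ha : IsLeast X (sInf X) := ⟨Nat.sInf_mem hX, fun _ => Nat.sInf_le⟩
    obtain ⟨ha1, haS⟩ := mem_Icc.1 ha.1.1
    rw [hskip _ (hτ.2 ⟨ha1, ha.1.2.1⟩) (by omega) ha.2,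
      sum_eq_single_of_mem _ ha.1.1 fun b _ hba => if_neg fun hb => hba (((hP b).1 hb).unique ha),
      if_pos ((hP _).2 ha)]
  · rw [hskip (S + 1) (by omega) le_rfl fun t ht => (hX ⟨t, ht⟩).elim,
      Icc_eq_empty (by omega), sum_empty]
    exact hRHS

end Line

def IsMarginalContribution3 (S : ℕ) (φ f g h : ℕ → ℕ → ℕ → ℝ) : Prop :=
  ∀ (d : Fin 3) q, IsMarginalContribution S (fun t => uncurry3 φ (setCoord d q t))
    (fun t => marg f g h d (setCoord d q t))

lemma isMarginalContribution3 {S : ℕ} {φ f g h : ℕ → ℕ → ℕ → ℝ}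
    (hf : ∀ x y z, f x y z =
      max ((x : ℝ) * ∑ x' ∈ Icc x S, φ x' y z - ∑ x' ∈ Icc (x + 1) S, f x' y z) 0)
    (hg : ∀ x y z, g x y z =
      max ((y : ℝ) * ∑ y' ∈ Icc y S, φ x y' z - ∑ y' ∈ Icc (y + 1) S, g x y' z) 0)
    (hh : ∀ x y z, h x y z =
      max ((z : ℝ) * ∑ z' ∈ Icc z S, φ x y z' - ∑ z' ∈ Icc (z + 1) S, h x y z') 0) :
    IsMarginalContribution3 S φ f g h := by
  intro d q t
  fin_cases d
  exacts [hf t q.2.1 q.2.2, hg q.1 t q.2.2, hh q.1 q.2.1 t]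

section Decomposition

variable {S : ℕ}

lemma profit3_eq_sum_lineProfit (φ : ℕ → ℕ → ℕ → ℝ) (A : ℕ → ℕ → ℕ → ℕ) :
    profit3 S φ A = ∑ d : Fin 3, ∑ q ∈ lineBase S d, lineProfit S
      (fun t => uncurry3 φ (setCoord d q t)) (fun t => uncurry3 A (setCoord d q t) = d + 1) := by
  have hline : ∀ d : Fin 3, ∑ q ∈ lineBase S d, lineProfit S
      (fun t => uncurry3 φ (setCoord d q t)) (fun t => uncurry3 A (setCoord d q t) = d + 1) =
      ∑ p ∈ grid3 S, if uncurry3 A p = d + 1 then uncurry3 φ p *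
        (sInf {t | 1 ≤ t ∧ uncurry3 A (setCoord d p t) = d + 1} : ℕ) else 0 := by
    intro d
    rw [sum_grid3_eq_sum_lineBase d]
    simp only [lineProfit, setCoord_setCoord]
  simp only [hline, Fin.sum_univ_three, profit3, sum_filter]
  rfl

lemma sum_segWt_eq_sum_lines (f g h : ℕ → ℕ → ℕ → ℝ) {C : Finset (Fin 3 × (ℕ × ℕ × ℕ))}
    (hC : ∀ s ∈ C, s.2 ∈ grid3 S) :
    ∑ s ∈ C, segWt S f g h s = ∑ d : Fin 3, ∑ q ∈ lineBase S d, ∑ a ∈ Icc 1 S,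
      if (d, setCoord d q a) ∈ C then ∑ t ∈ Icc a S, marg f g h d (setCoord d q t) else 0 := by
  have hsub : C ⊆ univ ×ˢ grid3 S := fun s hs => mem_product.2 ⟨mem_univ _, hC s hs⟩
  have hext : ∑ s ∈ C, segWt S f g h s =
      ∑ s ∈ univ ×ˢ grid3 S, if s ∈ C then segWt S f g h s else 0 := by
    rw [sum_ite_mem, inter_eq_right.2 hsub]
  rw [hext, sum_product]
  refine sum_congr rfl fun d _ => ?_
  rw [sum_grid3_eq_sum_lineBase d]
  simp only [segWt_eq, coord_setCoord, setCoord_setCoord]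

end Decomposition

section Segments

variable {S : ℕ} {d : Fin 3} {p q : ℕ × ℕ × ℕ} {t : ℕ}

lemma setCoord_eq_of_mem_segPts (hq : q ∈ segPts S (d, p)) : setCoord d q = setCoord d p := by
  obtain ⟨t, -, rfl⟩ := mem_segPts.1 hq
  funext s
  exact setCoord_setCoord

lemma setCoord_mem_segPts_iff :
    setCoord d q t ∈ segPts S (d, p) ↔ setCoord d q (coord d p) = p ∧ t ∈ Icc (coord d p) S := by
  constructor
  · intro hq
    have hline : ∀ s, setCoord d q s = setCoord d p s := fun s => by
      rw [← congrFun (setCoord_eq_of_mem_segPts hq) s, setCoord_setCoord]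
    obtain ⟨t', ht', heq⟩ := mem_segPts.1 hq
    obtain rfl : t' = t := by simpa using congrArg (coord d) heq
    exact ⟨by rw [hline, setCoord_coord], ht'⟩
  · rintro ⟨hline, ht⟩
    refine mem_segPts.2 ⟨t, ht, ?_⟩
    calc setCoord d p t = setCoord d (setCoord d q (coord d p)) t := by rw [hline]
      _ = setCoord d q t := setCoord_setCoord

lemma setCoord_mem_segPts (hq : q ∈ segPts S (d, p)) (ht : t ∈ Icc (coord d q) S) :
    setCoord d q t ∈ segPts S (d, p) := by
  obtain ⟨t', ht', rfl⟩ := mem_segPts.1 hq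
  rw [coord_setCoord, mem_Icc] at ht
  rw [setCoord_setCoord]
  exact mem_segPts.2 ⟨t, mem_Icc.2 ⟨(mem_Icc.1 ht').1.trans ht.1, ht.2⟩, rfl⟩

end Segments

section PackingToAllocation

variable {S : ℕ} {C : Finset (Fin 3 × (ℕ × ℕ × ℕ))} {p : ℕ × ℕ × ℕ}

/-- A point covered by a segment of direction `d` is allocated to bidder `d + 1`. -/
noncomputable def allocOf (S : ℕ) (C : Finset (Fin 3 × (ℕ × ℕ × ℕ))) (p : ℕ × ℕ × ℕ) : ℕ :=
  open Classical in if h : ∃ s ∈ C, p ∈ segPts S s then (h.choose.1 : ℕ) + 1 else 0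

lemma allocOf_le_three : allocOf S C p ≤ 3 := by
  unfold allocOf
  split_ifs with h
  · have := h.choose.1.isLt
    omega
  · omega

lemma allocOf_eq_of_mem (hdisj : (C : Set _).PairwiseDisjoint (segPts S))
    {s : Fin 3 × (ℕ × ℕ × ℕ)} (hs : s ∈ C) (hp : p ∈ segPts S s) : allocOf S C p = s.1 + 1 := by
  have h : ∃ s ∈ C, p ∈ segPts S s := ⟨s, hs, hp⟩
  rw [allocOf, dif_pos h, hdisj.elim_finset h.choose_spec.1 hs _ h.choose_spec.2 hp]

lemma allocOf_eq_succ_iff (hdisj : (C : Set _).PairwiseDisjoint (segPts S)) {d : Fin 3} :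
    allocOf S C p = d + 1 ↔ ∃ a, (d, a) ∈ C ∧ p ∈ segPts S (d, a) := by
  refine ⟨fun hp => ?_, fun ⟨a, ha, hpa⟩ => allocOf_eq_of_mem hdisj ha hpa⟩
  by_cases h : ∃ s ∈ C, p ∈ segPts S s
  · obtain ⟨⟨d', a⟩, hs, hps⟩ := h
    rw [allocOf_eq_of_mem hdisj hs hps, add_left_inj] at hp
    obtain rfl : d' = d := Fin.ext hp
    exact ⟨a, hs, hps⟩
  · rw [allocOf, dif_neg h] at hp
    omega

theorem exists_mono3_profit3_eq_sum_segWt {φ f g h : ℕ → ℕ → ℕ → ℝ}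
    (hm : IsMarginalContribution3 S φ f g h) (hvalid : ∀ s ∈ C, ValidSeg S f g h s)
    (hdisj : (C : Set _).PairwiseDisjoint (segPts S)) :
    ∃ A : ℕ → ℕ → ℕ → ℕ, (∀ x y z, A x y z ≤ 3) ∧ Mono3 S A ∧
      profit3 S φ A = ∑ s ∈ C, segWt S f g h s := by
  refine ⟨fun x y z => allocOf S C (x, y, z), fun _ _ _ => allocOf_le_three, (mono3_iff _).2 ?_, ?_⟩
  · intro d p _ hp t ht
    obtain ⟨a, ha, hpa⟩ := (allocOf_eq_succ_iff hdisj).1 hp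
    exact (allocOf_eq_succ_iff hdisj).2 ⟨a, ha, setCoord_mem_segPts hpa ht⟩
  rw [profit3_eq_sum_lineProfit, sum_segWt_eq_sum_lines f g h fun s hs => (hvalid s hs).1]
  refine sum_congr rfl fun d _ => sum_congr rfl fun q _ => ?_
  have hapex : ∀ a, (d, setCoord d q a) ∈ C → a ∈ Icc 1 S ∧ 0 < marg f g h d (setCoord d q a) :=
    fun a ha => by
      obtain ⟨hgrid, hpos⟩ := (validSeg_iff f g h).1 (hvalid _ ha)
      exact ⟨(setCoord_mem_grid3.1 hgrid).2, hpos⟩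
  have hend : ∀ a, (d, setCoord d q a) ∈ C → setCoord d q S ∈ segPts S (d, setCoord d q a) :=
    fun a ha => setCoord_mem_segPts_iff.2
      ⟨by simp, by simpa using (mem_Icc.1 (hapex a ha).1).2⟩
  refine lineProfit_eq_sum_of_ray (hm d q) hapex (fun a b ha hb => ?_) (fun t => ?_)
  · have := hdisj.elim_finset ha hb _ (hend a ha) (hend b hb)
    simpa using congrArg (coord d ·.2) this
  · show allocOf S C (setCoord d q t) = d + 1 ↔ _
    rw [allocOf_eq_succ_iff hdisj]
    constructor
    · rintro ⟨a, ha, hqa⟩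
      obtain ⟨hline, ht⟩ := setCoord_mem_segPts_iff.1 hqa
      exact ⟨coord d a, by rwa [hline], mem_Icc.1 ht⟩
    · rintro ⟨a, ha, hat, htS⟩
      exact ⟨_, ha, setCoord_mem_segPts_iff.2 ⟨by simp, by simpa using ⟨hat, htS⟩⟩⟩

end PackingToAllocation

section AllocationToPacking

variable {S : ℕ} {f g h : ℕ → ℕ → ℕ → ℝ} {A : ℕ × ℕ × ℕ → ℕ}

/-- Its least element is where `packingOf` starts the segment on the `d`-line through `p`. -/
def apexSet (S : ℕ) (f g h : ℕ → ℕ → ℕ → ℝ) (A : ℕ × ℕ × ℕ → ℕ) (d : Fin 3)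
    (p : ℕ × ℕ × ℕ) : Set ℕ :=
  {t | t ∈ Icc 1 S ∧ A (setCoord d p t) = d + 1 ∧ 0 < marg f g h d (setCoord d p t)}

noncomputable def packingOf (S : ℕ) (f g h : ℕ → ℕ → ℕ → ℝ) (A : ℕ × ℕ × ℕ → ℕ) :
    Finset (Fin 3 × (ℕ × ℕ × ℕ)) :=
  open Classical in
  (univ ×ˢ grid3 S).filter fun s => IsLeast (apexSet S f g h A s.1 s.2) (coord s.1 s.2)

lemma mem_packingOf {s : Fin 3 × (ℕ × ℕ × ℕ)} :
    s ∈ packingOf S f g h A ↔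
      s.2 ∈ grid3 S ∧ IsLeast (apexSet S f g h A s.1 s.2) (coord s.1 s.2) := by
  simp [packingOf]

lemma setCoord_mem_packingOf_iff {d : Fin 3} {q : ℕ × ℕ × ℕ} (hq : q ∈ lineBase S d) {a : ℕ} :
    (d, setCoord d q a) ∈ packingOf S f g h A ↔ IsLeast (apexSet S f g h A d q) a := by
  simp only [mem_packingOf, coord_setCoord, apexSet, setCoord_setCoord]
  exact ⟨And.right, fun ha => ⟨setCoord_mem_grid3_of_mem_lineBase hq ha.1.1, ha⟩⟩

lemma validSeg_of_mem_packingOf {s : Fin 3 × (ℕ × ℕ × ℕ)} (hs : s ∈ packingOf S f g h A) :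
    ValidSeg S f g h s := by
  obtain ⟨hgrid, hleast⟩ := mem_packingOf.1 hs
  have hpos := hleast.1.2.2
  rw [setCoord_coord] at hpos
  exact (validSeg_iff f g h).2 ⟨hgrid, hpos⟩

lemma pairwiseDisjoint_packingOf
    (hA : ∀ (d : Fin 3) p, p ∈ grid3 S → A p = d + 1 →
      ∀ t ∈ Icc (coord d p) S, A (setCoord d p t) = d + 1) :
    (packingOf S f g h A : Set _).PairwiseDisjoint (segPts S) := by
  have halloc : ∀ {d p q}, (d, p) ∈ packingOf S f g h A → q ∈ segPts S (d, p) → A q = d + 1 := by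
    intro d p q hs hq
    obtain ⟨hgrid, hleast⟩ := mem_packingOf.1 hs
    have hp := hleast.1.2.1
    rw [setCoord_coord] at hp
    obtain ⟨t, ht, rfl⟩ := mem_segPts.1 hq
    exact hA d p hgrid hp t ht
  rintro ⟨d, p⟩ hs ⟨d', p'⟩ hs' hne
  refine Finset.disjoint_left.2 fun q hq hq' => hne ?_
  obtain rfl : d = d' := Fin.ext (by have := halloc hs hq; have := halloc hs' hq'; omega)
  have hline : setCoord d p = setCoord d p' :=
    (setCoord_eq_of_mem_segPts hq).symm.trans (setCoord_eq_of_mem_segPts hq')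
  have hcoord : coord d p = coord d p' := by
    refine (mem_packingOf.1 hs).2.unique ?_
    simpa only [apexSet, hline] using (mem_packingOf.1 hs').2
  rw [← setCoord_coord (d := d) (p := p), ← setCoord_coord (d := d) (p := p'), hline, hcoord]

theorem exists_packing_profit3_le_sum_segWt {φ : ℕ → ℕ → ℕ → ℝ}
    (hm : IsMarginalContribution3 S φ f g h) {A : ℕ → ℕ → ℕ → ℕ} (hA : Mono3 S A) :
    ∃ C : Finset (Fin 3 × (ℕ × ℕ × ℕ)), (∀ s ∈ C, ValidSeg S f g h s) ∧
      (C : Set _).PairwiseDisjoint (segPts S) ∧ profit3 S φ A ≤ ∑ s ∈ C, segWt S f g h s := by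
  have hA' := (mono3_iff A).1 hA
  refine ⟨packingOf S f g h (uncurry3 A), fun s hs => validSeg_of_mem_packingOf hs,
    pairwiseDisjoint_packingOf hA', ?_⟩
  rw [profit3_eq_sum_lineProfit, sum_segWt_eq_sum_lines f g h fun s hs => (mem_packingOf.1 hs).1]
  refine sum_le_sum fun d _ => sum_le_sum fun q hq => lineProfit_le_sum_of_isLeast (hm d q)
    (fun t ht hBt t' ht' => ?_) fun a => setCoord_mem_packingOf_iff hq
  simpa using hA' d _ (setCoord_mem_grid3_of_mem_lineBase hq ht) hBt t' (by simpa using ht')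

end AllocationToPacking

end ThreeBidder

theorem threeBidder_auction_eq_segments_general
    (S : ℕ) (φ f g h : ℕ → ℕ → ℕ → ℝ)
    (hf : ∀ x y z, f x y z =
      max ((x : ℝ) * ∑ x' ∈ Finset.Icc x S, φ x' y z
            - ∑ x' ∈ Finset.Icc (x + 1) S, f x' y z) 0)
    (hg : ∀ x y z, g x y z =
      max ((y : ℝ) * ∑ y' ∈ Finset.Icc y S, φ x y' z
            - ∑ y' ∈ Finset.Icc (y + 1) S, g x y' z) 0)
    (hh : ∀ x y z, h x y z =
      max ((z : ℝ) * ∑ z' ∈ Finset.Icc z S, φ x y z'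
            - ∑ z' ∈ Finset.Icc (z + 1) S, h x y z') 0) :
    sSup {r : ℝ | ∃ A : ℕ → ℕ → ℕ → ℕ, (∀ x y z, A x y z ≤ 3) ∧
        Mono3 S A ∧ r = profit3 S φ A}
    = sSup {r : ℝ | ∃ C : Finset (Fin 3 × (ℕ × ℕ × ℕ)),
        (∀ s ∈ C, ValidSeg S f g h s) ∧
        (∀ s ∈ C, ∀ t ∈ C, s ≠ t → Disjoint (segPts S s) (segPts S t)) ∧
        r = ∑ s ∈ C, segWt S f g h s} := by
  have hm := ThreeBidder.isMarginalContribution3 hf hg hh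
  apply csSup_eq_csSup_of_forall_exists_le
  · rintro _ ⟨A, -, hA, rfl⟩
    obtain ⟨C, hvalid, hdisj, hle⟩ := ThreeBidder.exists_packing_profit3_le_sum_segWt hm hA
    exact ⟨_, ⟨C, hvalid, fun s hs t ht => hdisj hs ht, rfl⟩, hle⟩
  · rintro _ ⟨C, hvalid, hdisj, rfl⟩
    obtain ⟨A, hA3, hA, heq⟩ :=
      ThreeBidder.exists_mono3_profit3_eq_sum_segWt hm hvalid fun s hs t ht => hdisj s hs t ht
    exact ⟨_, ⟨A, hA3, hA, rfl⟩, heq.ge⟩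

/-- the three-bidder optimal auction design problem is equivalent
to the segment-packing problem: the maximum threshold profit over monotone
allocations equals the maximum total weight of a collection of pairwise
disjoint segments induced by `φ`. -/
theorem threeBidder_auction_eq_segments
    (S : ℕ) (φ f g h : ℕ → ℕ → ℕ → ℝ)
    (hφ : ∀ x y z, 0 ≤ φ x y z)
    (hφsum : ∑ p ∈ grid3 S, φ p.1 p.2.1 p.2.2 = 1)
    (hf : ∀ x y z, f x y z =
      max ((x : ℝ) * ∑ x' ∈ Finset.Icc x S, φ x' y z
            - ∑ x' ∈ Finset.Icc (x + 1) S, f x' y z) 0)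
    (hg : ∀ x y z, g x y z =
      max ((y : ℝ) * ∑ y' ∈ Finset.Icc y S, φ x y' z
            - ∑ y' ∈ Finset.Icc (y + 1) S, g x y' z) 0)
    (hh : ∀ x y z, h x y z =
      max ((z : ℝ) * ∑ z' ∈ Finset.Icc z S, φ x y z'
            - ∑ z' ∈ Finset.Icc (z + 1) S, h x y z') 0) :
    sSup {r : ℝ | ∃ A : ℕ → ℕ → ℕ → ℕ, (∀ x y z, A x y z ≤ 3) ∧
        Mono3 S A ∧ r = profit3 S φ A}
    = sSup {r : ℝ | ∃ C : Finset (Fin 3 × (ℕ × ℕ × ℕ)),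
        (∀ s ∈ C, ValidSeg S f g h s) ∧
        (∀ s ∈ C, ∀ t ∈ C, s ≠ t → Disjoint (segPts S s) (segPts S t)) ∧
        r = ∑ s ∈ C, segWt S f g h s} :=
  threeBidder_auction_eq_segments_general S φ f g h hf hg hh
end
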